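/- arXiv:math/0511408 — 8 statements merged into one kernel-verified Lean document; each statement's English description precedes it below -/
import Mathlib

section
/- Let H be a positive definite Hermitian matrix written in 2×2 block form H = [[Ξ, K*],[K, W]] with Ξ of size m×m, and let λ be an eigenvalue of H of multiplicity exactly m with λ not an eigenvalue of W. Then Ξ − λI = K*(W − λI)⁻¹K. -/
open Matrix
open scoped ComplexOrder

/-- Schur complement identity for an eigenvalue of full multiplicity `m`:
if `H = [[Ξ, Kᴴ],[K, W]]` is Hermitian positive definite, `λ` is an eigenvalue of `H`
whose eigenspace has dimension exactly `m`, and `W - λI` is invertible, then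
`Ξ - λI = Kᴴ (W - λI)⁻¹ K`. -/
theorem schur_complement_eigenvalue_full_multiplicity
    {m k : ℕ} (Ξ : Matrix (Fin m) (Fin m) ℂ) (W : Matrix (Fin k) (Fin k) ℂ)
    (K : Matrix (Fin k) (Fin m) ℂ) (lam : ℝ)
    (hH : (Matrix.fromBlocks Ξ Kᴴ K W).PosDef)
    (hmult : Module.finrank ℂ
      (LinearMap.ker (Matrix.mulVecLin
        (Matrix.fromBlocks Ξ Kᴴ K W - (lam : ℂ) • 1))) = m)
    (hW : IsUnit (W - (lam : ℂ) • 1)) :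
    Ξ - (lam : ℂ) • 1 = Kᴴ * (W - (lam : ℂ) • 1)⁻¹ * K := by
  set A : Matrix (Fin m) (Fin m) ℂ := Ξ - (lam : ℂ) • 1 with hA
  set D : Matrix (Fin k) (Fin k) ℂ := W - (lam : ℂ) • 1 with hD
  set S : Matrix (Fin m) (Fin m) ℂ := A - Kᴴ * D⁻¹ * K with hS
  have hDdet : IsUnit D.det := (Matrix.isUnit_iff_isUnit_det D).mp hW
  have hDinv : D⁻¹ * D = 1 := Matrix.nonsing_inv_mul D hDdet
  have hM : Matrix.fromBlocks Ξ Kᴴ K W - (lam : ℂ) • 1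
      = Matrix.fromBlocks A Kᴴ K D := by
    rw [← Matrix.fromBlocks_one, Matrix.fromBlocks_smul]
    ext i j
    cases i <;> cases j <;> simp [Matrix.fromBlocks, hA, hD]
  set M : Matrix (Fin m ⊕ Fin k) (Fin m ⊕ Fin k) ℂ := Matrix.fromBlocks A Kᴴ K D with hMdef
  -- key: any kernel element of M projects to kernel of S, injectively
  have key : ∀ v : Fin m ⊕ Fin k → ℂ, M.mulVec v = 0 →
      S.mulVec (v ∘ Sum.inl) = 0 ∧ (v ∘ Sum.inr) = -(D⁻¹.mulVec (K.mulVec (v ∘ Sum.inl))) := by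
    intro v hv
    set x := v ∘ Sum.inl
    set y := v ∘ Sum.inr
    have hv' : (Sum.elim (A.mulVec x + Kᴴ.mulVec y) (K.mulVec x + D.mulVec y) : Fin m ⊕ Fin k → ℂ) = 0 := by
      rw [← Matrix.fromBlocks_mulVec]; exact hv
    have h1 : A.mulVec x + Kᴴ.mulVec y = 0 := by
      funext i; exact congrFun hv' (Sum.inl i)
    have h2 : K.mulVec x + D.mulVec y = 0 := by
      funext i; exact congrFun hv' (Sum.inr i)
    have hy : y = -(D⁻¹.mulVec (K.mulVec x)) := by
      have : D.mulVec y = -(K.mulVec x) := by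
        rw [eq_neg_iff_add_eq_zero, add_comm]; exact h2
      calc y = (D⁻¹ * D).mulVec y := by rw [hDinv, Matrix.one_mulVec]
        _ = D⁻¹.mulVec (D.mulVec y) := (Matrix.mulVec_mulVec y D⁻¹ D).symm
        _ = -(D⁻¹.mulVec (K.mulVec x)) := by rw [this, Matrix.mulVec_neg]
    refine ⟨?_, hy⟩
    have : S.mulVec x = A.mulVec x - Kᴴ.mulVec (D⁻¹.mulVec (K.mulVec x)) := by
      rw [hS, Matrix.sub_mulVec, Matrix.mulVec_mulVec, Matrix.mulVec_mulVec]
    rw [this]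
    have hKy : Kᴴ.mulVec y = -(Kᴴ.mulVec (D⁻¹.mulVec (K.mulVec x))) := by
      rw [hy, Matrix.mulVec_neg]
    rw [sub_eq_add_neg, ← hKy, h1]
  -- build injective linear map from ker M.mulVecLin to ker S.mulVecLin
  let φ : LinearMap.ker M.mulVecLin →ₗ[ℂ] LinearMap.ker S.mulVecLin :=
    LinearMap.codRestrict (LinearMap.ker S.mulVecLin)
      ((LinearMap.funLeft ℂ ℂ Sum.inl).comp (Submodule.subtype _))
      (fun v => by
        have := (key v.1 v.2).1
        exact this)
  have hφinj : Function.Injective φ := by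
    intro v w hvw
    have hx : (v.1 ∘ Sum.inl) = (w.1 ∘ Sum.inl) := by
      funext i
      exact congrFun (congrArg Subtype.val hvw) i
    have hyv := (key v.1 v.2).2
    have hyw := (key w.1 w.2).2
    apply Subtype.ext
    funext i
    cases i with
    | inl i => exact congrFun hx i
    | inr i =>
      have : (v.1 ∘ Sum.inr) = (w.1 ∘ Sum.inr) := by rw [hyv, hyw, hx]
      exact congrFun this i
  rw [hM] at hmult
  have hle : m ≤ Module.finrank ℂ (LinearMap.ker S.mulVecLin) := by
    exact le_of_eq_of_le hmult.symm (LinearMap.finrank_le_finrank_of_injective hφinj)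
  have hge : Module.finrank ℂ (LinearMap.ker S.mulVecLin) ≤ m := by
    have := Submodule.finrank_le (LinearMap.ker S.mulVecLin)
    simpa [Module.finrank_fintype_fun_eq_card] using this
  have htop : LinearMap.ker S.mulVecLin = ⊤ := by
    apply Submodule.eq_top_of_finrank_eq
    rw [le_antisymm hge hle, Module.finrank_fintype_fun_eq_card, Fintype.card_fin]
  have hS0 : S = 0 := by
    ext i j
    have : S.mulVec (Pi.single j 1) = 0 := by
      have := LinearMap.ker_eq_top.mp htop
      exact congrFun (congrArg DFunLike.coe this) (Pi.single j 1)
    have h := congrFun this i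
    rw [Matrix.mulVec_single] at h
    simpa using h
  have : A - Kᴴ * D⁻¹ * K = 0 := hS0
  rw [← sub_eq_zero]
  exact this
end

section
/- (Wilkinson's trick, matrix version) Let M = [[A, X],[X*, B]] be a Hermitian block matrix with A of size m×m and B invertible. If the null space of M has dimension m, then A = X B⁻¹ X*. -/
open Matrix

/-- Wilkinson's trick, matrix version: if `M = [[A, X],[Xᴴ, B]]` is Hermitian with `B`
invertible and the null space of `M` has dimension `m` (the size of `A`), then
`A = X B⁻¹ Xᴴ`. -/
theorem wilkinson_trick
    {m k : ℕ} (A : Matrix (Fin m) (Fin m) ℂ) (B : Matrix (Fin k) (Fin k) ℂ)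
    (X : Matrix (Fin m) (Fin k) ℂ)
    (hA : A.IsHermitian) (hB : B.IsHermitian) (hBinv : IsUnit B)
    (hker : Module.finrank ℂ
      (LinearMap.ker (Matrix.mulVecLin (Matrix.fromBlocks A X Xᴴ B))) = m) :
    A = X * B⁻¹ * Xᴴ := by
  haveI : Invertible B := hBinv.invertible
  set S : Matrix (Fin m) (Fin m) ℂ := A - X * ⅟B * Xᴴ with hS
  set M : Matrix (Fin m ⊕ Fin k) (Fin m ⊕ Fin k) ℂ := fromBlocks A X Xᴴ B with hM
  set D : Matrix (Fin m ⊕ Fin k) (Fin m ⊕ Fin k) ℂ := fromBlocks S 0 0 B with hD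
  set U : Matrix (Fin m ⊕ Fin k) (Fin m ⊕ Fin k) ℂ := fromBlocks 1 (X * ⅟B) 0 1 with hU
  set L : Matrix (Fin m ⊕ Fin k) (Fin m ⊕ Fin k) ℂ := fromBlocks 1 0 (⅟B * Xᴴ) 1 with hL
  have hfact : M = U * D * L := fromBlocks_eq_of_invertible₂₂ A X Xᴴ B
  -- unit dets
  have hUdet : IsUnit U.det := by
    rw [hU, det_fromBlocks_zero₂₁, det_one, det_one, one_mul]; exact isUnit_one
  have hLdet : IsUnit L.det := by
    rw [hL, det_fromBlocks_zero₁₂, det_one, det_one, one_mul]; exact isUnit_one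
  -- rank of M equals rank of D
  have hrank : M.rank = D.rank := by
    rw [hfact, rank_mul_eq_left_of_isUnit_det _ _ hLdet,
      rank_mul_eq_right_of_isUnit_det _ _ hUdet]
  -- rank-nullity for M : rank M = k
  have hdim : Module.finrank ℂ ((Fin m ⊕ Fin k) → ℂ) = m + k := by
    simp [Module.finrank_pi]
  have hrn : ∀ N : Matrix (Fin m ⊕ Fin k) (Fin m ⊕ Fin k) ℂ,
      N.rank + Module.finrank ℂ (LinearMap.ker N.mulVecLin) = m + k := by
    intro N
    rw [Matrix.rank, ← hdim]
    exact LinearMap.finrank_range_add_finrank_ker _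
  have hrM : M.rank = k := by
    have := hrn M
    omega
  have hkerD : Module.finrank ℂ (LinearMap.ker D.mulVecLin) = m := by
    have := hrn D
    omega
  -- kernel of D is (ker S) × 0
  have hkermem : ∀ v : (Fin m ⊕ Fin k) → ℂ,
      v ∈ LinearMap.ker D.mulVecLin ↔ S.mulVec (v ∘ Sum.inl) = 0 ∧ (v ∘ Sum.inr) = 0 := by
    intro v
    have hv : v = Sum.elim (v ∘ Sum.inl) (v ∘ Sum.inr) := (Sum.elim_comp_inl_inr v).symm
    rw [LinearMap.mem_ker, mulVecLin_apply, hD]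
    constructor
    · intro h
      rw [hv, fromBlocks_mulVec] at h
      have h1 := congrFun h
      have hB0 : B.mulVec (v ∘ Sum.inr) = 0 := by
        funext i
        have := h1 (Sum.inr i)
        simpa using this
      have hv0 : v ∘ Sum.inr = 0 := by
        have := congrArg (fun w => (⅟B).mulVec w) hB0
        simpa [Matrix.mulVec_mulVec] using this
      refine ⟨?_, hv0⟩
      funext i
      have := h1 (Sum.inl i)
      simpa [hv0] using this
    · rintro ⟨h1, h2⟩
      rw [hv, fromBlocks_mulVec]
      funext i
      cases i <;>
        simp [Sum.elim_comp_inl, Sum.elim_comp_inr, h1, h2]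
  -- linear equivalence between ker D and ker S
  let e : LinearMap.ker D.mulVecLin ≃ₗ[ℂ] LinearMap.ker S.mulVecLin :=
    { toFun := fun v => ⟨v.1 ∘ Sum.inl, by
        simpa [LinearMap.mem_ker, mulVecLin_apply] using ((hkermem v.1).mp v.2).1⟩
      invFun := fun x => ⟨Sum.elim x.1 0, by
        refine (hkermem _).mpr ⟨?_, ?_⟩
        · have hx := x.2
          rw [LinearMap.mem_ker, mulVecLin_apply] at hx
          rw [Sum.elim_comp_inl]
          exact hx
        · funext i; simp⟩
      map_add' := fun v w => rfl
      map_smul' := fun c v => rfl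
      left_inv := fun v => by
        ext i
        cases i with
        | inl i => simp
        | inr i =>
          have := congrFun ((hkermem v.1).mp v.2).2 i
          simpa using this.symm
      right_inv := fun x => by ext i; simp }
  have hkerS : Module.finrank ℂ (LinearMap.ker S.mulVecLin) = m := by
    rw [← e.finrank_eq, hkerD]
  -- hence ker S = ⊤
  have hSfin : Module.finrank ℂ (Fin m → ℂ) = m := by simp
  have htop : LinearMap.ker S.mulVecLin = ⊤ :=
    Submodule.eq_top_of_finrank_eq (by rw [hkerS, hSfin])
  have hS0 : S = 0 := by
    ext i j
    have hj : (Pi.single j 1 : Fin m → ℂ) ∈ LinearMap.ker S.mulVecLin := htop ▸ trivial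
    have := congrFun (LinearMap.mem_ker.mp hj) i
    simpa [mulVecLin_apply, mulVec_single] using this
  have : A = X * ⅟B * Xᴴ := by
    have := sub_eq_zero.mp hS0
    simpa using this
  rw [this, invOf_eq_nonsing_inv]
end

section
/- Let H be a Hermitian positive definite n×n matrix and P an orthogonal projection of rank m. Define H_P = P H P + (I−P) H (I−P). Then for every vector f in the range of P, (f, H⁻¹ f) ≥ (f, H_P⁻¹ f) ≥ 0; moreover H_P is positive definite. -/
open Matrix
open scoped ComplexOrder

lemma starMulVec_dot {n : ℕ} (A : Matrix (Fin n) (Fin n) ℂ) (x y : Fin n → ℂ) :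
    star (A.mulVec x) ⬝ᵥ y = star x ⬝ᵥ Aᴴ.mulVec y := by
  rw [star_mulVec, dotProduct_mulVec]

lemma quadform_conj {n : ℕ} (A M : Matrix (Fin n) (Fin n) ℂ) (hA : Aᴴ = A) (x : Fin n → ℂ) :
    star x ⬝ᵥ (A * M * A).mulVec x = star (A.mulVec x) ⬝ᵥ M.mulVec (A.mulVec x) := by
  rw [starMulVec_dot, hA, mulVec_mulVec, mulVec_mulVec, Matrix.mul_assoc]

/-- For `H` Hermitian positive definite and `P` a rank-`m` orthogonal projection, the
`P`-diagonal part `H_P = PHP + (I−P)H(I−P)` is positive definite, and for every `f` in the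
range of `P` one has `(f, H⁻¹f) ≥ (f, H_P⁻¹f) ≥ 0`. -/
theorem pDiagonal_part_galerkin_monotone
    {n : ℕ} (H P : Matrix (Fin n) (Fin n) ℂ) (m : ℕ)
    (hH : H.PosDef) (hP : P.IsHermitian) (hP2 : P * P = P)
    (hrank : P.rank = m) :
    (P * H * P + (1 - P) * H * (1 - P)).PosDef ∧
    ∀ f : Fin n → ℂ, P.mulVec f = f →
      0 ≤ (dotProduct (star f)
            ((P * H * P + (1 - P) * H * (1 - P))⁻¹.mulVec f)).re ∧
      (dotProduct (star f)
            ((P * H * P + (1 - P) * H * (1 - P))⁻¹.mulVec f)).re ≤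
        (dotProduct (star f) (H⁻¹.mulVec f)).re := by
  set Q : Matrix (Fin n) (Fin n) ℂ := 1 - P with hQdef
  have hPH : Pᴴ = P := hP.eq
  have hQH : Qᴴ = Q := by simp [hQdef, hP.eq]
  have hQ2 : Q * Q = Q := by
    simp only [hQdef, sub_mul, mul_sub, one_mul, mul_one, hP2]
    abel
  set Hp : Matrix (Fin n) (Fin n) ℂ := P * H * P + Q * H * Q with hHpdef
  have hHpH : Hp.IsHermitian := by
    simp [Matrix.IsHermitian, hHpdef, conjTranspose_mul, hPH, hQH, hH.1.eq, Matrix.mul_assoc]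
  have hHp_pd : Hp.PosDef := by
    refine Matrix.PosDef.of_dotProduct_mulVec_pos hHpH (fun x hx => ?_)
    have hsplit : star x ⬝ᵥ Hp.mulVec x
        = star (P.mulVec x) ⬝ᵥ H.mulVec (P.mulVec x)
          + star (Q.mulVec x) ⬝ᵥ H.mulVec (Q.mulVec x) := by
      rw [hHpdef, add_mulVec, dotProduct_add, quadform_conj P H hPH, quadform_conj Q H hQH]
    rw [hsplit]
    by_cases hPx : P.mulVec x = 0
    · have hQx : Q.mulVec x = x := by
        simp [hQdef, sub_mulVec, one_mulVec, hPx]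
      have hz : star (0 : Fin n → ℂ) ⬝ᵥ H.mulVec 0 = 0 := by simp
      rw [hPx, hQx, hz, zero_add]
      exact hH.dotProduct_mulVec_pos hx
    · exact add_pos_of_pos_of_nonneg (hH.dotProduct_mulVec_pos hPx) (hH.posSemidef.dotProduct_mulVec_nonneg _)
  have hHdet : IsUnit H.det := (Matrix.isUnit_iff_isUnit_det H).mp hH.isUnit
  have hHpdet : IsUnit Hp.det := (Matrix.isUnit_iff_isUnit_det Hp).mp hHp_pd.isUnit
  have hPQ : P * Q = 0 := by simp [hQdef, mul_sub, hP2]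
  have hQP : Q * P = 0 := by simp [hQdef, sub_mul, hP2]
  have hcomm : P * Hp = Hp * P := by
    have l : P * Hp = P * H * P := by
      rw [hHpdef, Matrix.mul_add]
      simp only [← Matrix.mul_assoc]
      rw [hP2, hPQ, Matrix.zero_mul, Matrix.zero_mul, add_zero]
    have r : Hp * P = P * H * P := by
      rw [hHpdef, Matrix.add_mul, Matrix.mul_assoc (P * H) P P, hP2,
        Matrix.mul_assoc (Q * H) Q P, hQP, Matrix.mul_zero, add_zero]
    rw [l, r]
  have hcomm_inv : P * Hp⁻¹ = Hp⁻¹ * P := by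
    calc P * Hp⁻¹ = Hp⁻¹ * Hp * P * Hp⁻¹ := by
          rw [Matrix.nonsing_inv_mul Hp hHpdet, Matrix.one_mul]
      _ = Hp⁻¹ * (P * Hp) * Hp⁻¹ := by rw [Matrix.mul_assoc Hp⁻¹, hcomm]
      _ = Hp⁻¹ * P * (Hp * Hp⁻¹) := by
          simp only [Matrix.mul_assoc]
      _ = Hp⁻¹ * P := by rw [Matrix.mul_nonsing_inv Hp hHpdet, Matrix.mul_one]
  refine ⟨hHp_pd, fun f hf => ?_⟩
  set g : Fin n → ℂ := Hp⁻¹.mulVec f with hgdef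
  have hPg : P.mulVec g = g := by
    rw [hgdef, mulVec_mulVec, hcomm_inv, ← mulVec_mulVec, hf]
  have hQg : Q.mulVec g = 0 := by
    simp [hQdef, sub_mulVec, one_mulVec, hPg]
  have hHpg : Hp.mulVec g = f := by
    rw [hgdef, mulVec_mulVec, Matrix.mul_nonsing_inv Hp hHpdet, one_mulVec]
  have h4 : star g ⬝ᵥ H.mulVec g = star g ⬝ᵥ f := by
    have e1 : star g ⬝ᵥ Hp.mulVec g = star g ⬝ᵥ H.mulVec g := by
      rw [hHpdef, add_mulVec, dotProduct_add, quadform_conj P H hPH, quadform_conj Q H hQH,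
        hPg, hQg]
      simp
    rw [← e1, hHpg]
  have hfg : star f ⬝ᵥ g = star g ⬝ᵥ Hp.mulVec g := by
    conv_lhs => rw [← hHpg, starMulVec_dot, hHpH.eq, hHpg]
    rw [← hHpg]
  have hfg_nonneg : 0 ≤ (star f ⬝ᵥ g).re := by
    have := hHp_pd.posSemidef.dotProduct_mulVec_nonneg g
    rw [← hfg] at this
    exact (Complex.le_def.mp this).1
  refine ⟨hfg_nonneg, ?_⟩
  set u : Fin n → ℂ := H⁻¹.mulVec f with hudef
  have hHu : H.mulVec u = f := by
    rw [hudef, mulVec_mulVec, Matrix.mul_nonsing_inv H hHdet, one_mulVec]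
  have hs1 : star u ⬝ᵥ f = star f ⬝ᵥ H⁻¹.mulVec f := by
    rw [hudef, starMulVec_dot, hH.1.inv.eq]
  have hs2 : star u ⬝ᵥ H.mulVec g = star f ⬝ᵥ g := by
    rw [hudef, starMulVec_dot, hH.1.inv.eq, mulVec_mulVec,
      Matrix.nonsing_inv_mul H hHdet, one_mulVec]
  have hexp : star (u - g) ⬝ᵥ H.mulVec (u - g)
      = star f ⬝ᵥ H⁻¹.mulVec f - star f ⬝ᵥ g := by
    rw [star_sub, mulVec_sub, sub_dotProduct, dotProduct_sub, dotProduct_sub, hHu, h4,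
      hs1, hs2]
    ring
  have hw := hH.posSemidef.dotProduct_mulVec_nonneg (u - g)
  rw [hexp] at hw
  have := (Complex.le_def.mp hw).1
  rw [Complex.sub_re, Complex.zero_re, ← hudef] at this
  linarith
end

section
/- Let H be a Hermitian matrix bounded below, represented in block form H = [[Ξ, K*],[K, W]] with respect to an orthogonal decomposition, where λ is an eigenvalue of H of multiplicity m equal to the size of the block Ξ, and W − λI is invertible with ‖(W−λI)⁻¹‖ ≤ 1/γ for some γ > 0. Then ‖Ξ − λI‖ ≤ ‖K‖²/γ. -/
open Matrix
open scoped Matrix.Norms.L2Operator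

/-- Kahan-type bound: if `H = [[Ξ, Kᴴ],[K, W]]` is Hermitian, `λ` is an eigenvalue of `H`
of multiplicity `m` (the size of `Ξ`), `W − λI` is invertible with
`‖(W − λI)⁻¹‖ ≤ 1/γ`, then `‖Ξ − λI‖ ≤ ‖K‖²/γ`. -/
theorem opNorm_residual_bound
    {m k : ℕ} (Ξ : Matrix (Fin m) (Fin m) ℂ) (W : Matrix (Fin k) (Fin k) ℂ)
    (K : Matrix (Fin k) (Fin m) ℂ) (lam γ : ℝ) (hγ : 0 < γ)
    (hH : (Matrix.fromBlocks Ξ Kᴴ K W).IsHermitian)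
    (hmult : Module.finrank ℂ
      (LinearMap.ker (Matrix.mulVecLin
        (Matrix.fromBlocks Ξ Kᴴ K W - (lam : ℂ) • 1))) = m)
    (hWinv : IsUnit (W - (lam : ℂ) • 1))
    (hWnorm : ‖(W - (lam : ℂ) • 1)⁻¹‖ ≤ 1 / γ) :
    ‖Ξ - (lam : ℂ) • 1‖ ≤ ‖K‖ ^ 2 / γ := by
  set Wl := W - (lam : ℂ) • 1 with hWl
  set Xl := Ξ - (lam : ℂ) • 1 with hXl
  have hWdet : IsUnit Wl.det := (Matrix.isUnit_iff_isUnit_det _).mp hWinv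
  have hblock : Matrix.fromBlocks Ξ Kᴴ K W - (lam : ℂ) • 1
      = Matrix.fromBlocks Xl Kᴴ K Wl := by
    rw [← Matrix.fromBlocks_one (l := Fin m) (m := Fin k) (α := ℂ),
      Matrix.fromBlocks_smul, sub_eq_add_neg, Matrix.fromBlocks_neg,
      Matrix.fromBlocks_add]
    simp [hXl, hWl, sub_eq_add_neg]
  rw [hblock] at hmult
  set A := Matrix.fromBlocks Xl Kᴴ K Wl with hA
  -- projection of the kernel onto the first block of coordinates
  set π : LinearMap.ker A.mulVecLin →ₗ[ℂ] (Fin m → ℂ) :=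
    (LinearMap.funLeft ℂ ℂ Sum.inl).comp (LinearMap.ker A.mulVecLin).subtype with hπ
  have kernel_eq : ∀ v : Fin m ⊕ Fin k → ℂ, A.mulVec v = 0 →
      (Xl.mulVec (v ∘ Sum.inl) + Kᴴ.mulVec (v ∘ Sum.inr) = 0 ∧
       K.mulVec (v ∘ Sum.inl) + Wl.mulVec (v ∘ Sum.inr) = 0) := by
    intro v hv
    have hvdecomp : v = Sum.elim (v ∘ Sum.inl) (v ∘ Sum.inr) := by
      funext i; cases i <;> rfl
    rw [hA, hvdecomp, Matrix.fromBlocks_mulVec] at hv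
    constructor
    · funext i; exact congrFun hv (Sum.inl i)
    · funext i; exact congrFun hv (Sum.inr i)
  have hWcancel : ∀ b : Fin k → ℂ, Wl⁻¹.mulVec (Wl.mulVec b) = b := by
    intro b
    rw [Matrix.mulVec_mulVec, Matrix.nonsing_inv_mul _ hWdet, Matrix.one_mulVec]
  have hπinj : Function.Injective π := by
    rw [← LinearMap.ker_eq_bot, LinearMap.ker_eq_bot']
    intro v hv
    have hv1 : v.1 ∘ Sum.inl = 0 := hv
    have hker : A.mulVec v.1 = 0 := v.2
    obtain ⟨-, h2⟩ := kernel_eq v.1 hker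
    rw [hv1, Matrix.mulVec_zero, zero_add] at h2
    have hv2 : v.1 ∘ Sum.inr = 0 := by
      have := hWcancel (v.1 ∘ Sum.inr)
      rw [h2, Matrix.mulVec_zero] at this
      exact this.symm
    apply Subtype.ext
    funext i
    cases i with
    | inl i => exact congrFun hv1 i
    | inr i => exact congrFun hv2 i
  have hπsurj : Function.Surjective π := by
    have hfr : Module.finrank ℂ (LinearMap.ker A.mulVecLin)
        = Module.finrank ℂ (Fin m → ℂ) := by
      rw [hmult]; simp
    exact (LinearMap.injective_iff_surjective_of_finrank_eq_finrank hfr).mp hπinj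
  have key : Xl = Kᴴ * Wl⁻¹ * K := by
    have hmv : ∀ x : Fin m → ℂ, Xl.mulVec x = (Kᴴ * Wl⁻¹ * K).mulVec x := by
      intro x
      obtain ⟨v, hvx⟩ := hπsurj x
      have hvx : v.1 ∘ Sum.inl = x := hvx
      obtain ⟨h1, h2⟩ := kernel_eq v.1 v.2
      rw [hvx] at h1 h2
      have hb : v.1 ∘ Sum.inr = -(Wl⁻¹.mulVec (K.mulVec x)) := by
        have h2' : Wl.mulVec (v.1 ∘ Sum.inr) = -(K.mulVec x) := by
          linear_combination (norm := module) h2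
        have := hWcancel (v.1 ∘ Sum.inr)
        rw [h2', Matrix.mulVec_neg] at this
        exact this.symm
      rw [hb, Matrix.mulVec_neg] at h1
      have : Xl.mulVec x = Kᴴ.mulVec (Wl⁻¹.mulVec (K.mulVec x)) := by
        linear_combination (norm := module) h1
      rw [this, Matrix.mulVec_mulVec, Matrix.mulVec_mulVec, Matrix.mul_assoc]
    ext i j
    have := congrFun (hmv (Pi.single j 1)) i
    simpa [Matrix.mulVec_single] using this
  calc ‖Xl‖ = ‖Kᴴ * Wl⁻¹ * K‖ := by rw [key]
    _ ≤ ‖Kᴴ * Wl⁻¹‖ * ‖K‖ := Matrix.l2_opNorm_mul _ _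
    _ ≤ (‖Kᴴ‖ * ‖Wl⁻¹‖) * ‖K‖ := by
        gcongr; exact Matrix.l2_opNorm_mul _ _
    _ ≤ (‖K‖ * (1 / γ)) * ‖K‖ := by
        rw [Matrix.l2_opNorm_conjTranspose]
        gcongr
    _ = ‖K‖ ^ 2 / γ := by ring
end

section
/- Let H = [[Ξ, K*],[K, W]] be a Hermitian block matrix where λ is an eigenvalue of H of multiplicity m = size of Ξ, W − λI is invertible, and let μ₁,…,μ_m be the eigenvalues of Ξ. Then ∑_{i=1}^m |μ_i − λ| ≤ ‖(W − λI)⁻¹‖ · ‖K‖_F², where ‖K‖_F is the Frobenius (Hilbert–Schmidt) norm of K. -/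
open Matrix
open scoped Matrix.Norms.L2Operator

/-- If the block matrix has kernel of full first-block dimension and D invertible,
the Schur complement vanishes. -/
theorem schur_zero {m k : ℕ} (A : Matrix (Fin m) (Fin m) ℂ) (D : Matrix (Fin k) (Fin k) ℂ)
    (B : Matrix (Fin m) (Fin k) ℂ) (C : Matrix (Fin k) (Fin m) ℂ)
    (hD : IsUnit D)
    (hker : Module.finrank ℂ (LinearMap.ker (Matrix.mulVecLin (Matrix.fromBlocks A B C D))) = m) :
    A = B * D⁻¹ * C := by
  have hDdet : IsUnit D.det := (isUnit_iff_isUnit_det D).mp hD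
  have hMD : D⁻¹ * D = 1 := nonsing_inv_mul D hDdet
  set S : Matrix (Fin m) (Fin m) ℂ := A - B * D⁻¹ * C with hSdef
  -- the projection to the first block maps ker H' injectively into ker S
  have hproj : ∀ v ∈ LinearMap.ker (Matrix.mulVecLin (Matrix.fromBlocks A B C D)),
      S *ᵥ (v ∘ Sum.inl) = 0 ∧ v ∘ Sum.inr = -(D⁻¹ *ᵥ (C *ᵥ (v ∘ Sum.inl))) := by
    intro v hv
    rw [LinearMap.mem_ker, mulVecLin_apply] at hv
    set x := v ∘ Sum.inl with hx
    set y := v ∘ Sum.inr with hy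
    have hv' : fromBlocks A B C D *ᵥ Sum.elim x y = 0 := by
      rwa [Sum.elim_comp_inl_inr]
    rw [fromBlocks_mulVec] at hv'
    have h1 : A *ᵥ x + B *ᵥ y = 0 := by
      funext i; exact congrFun hv' (Sum.inl i)
    have h2 : C *ᵥ x + D *ᵥ y = 0 := by
      funext i; exact congrFun hv' (Sum.inr i)
    have hy' : y = -(D⁻¹ *ᵥ (C *ᵥ x)) := by
      have : D *ᵥ y = -(C *ᵥ x) := by
        rw [eq_neg_iff_add_eq_zero, add_comm]; exact h2
      calc y = (D⁻¹ * D) *ᵥ y := by rw [hMD, one_mulVec]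
        _ = D⁻¹ *ᵥ (D *ᵥ y) := by rw [mulVec_mulVec]
        _ = -(D⁻¹ *ᵥ (C *ᵥ x)) := by rw [this, mulVec_neg]
    refine ⟨?_, hy'⟩
    have : S *ᵥ x = A *ᵥ x + B *ᵥ y := by
      rw [hy', mulVec_neg, hSdef, sub_mulVec, ← mulVec_mulVec, ← mulVec_mulVec,
        sub_eq_add_neg]
    rw [this, h1]
  -- injective linear map from ker H' to ker S
  let f : LinearMap.ker (Matrix.mulVecLin (Matrix.fromBlocks A B C D)) →ₗ[ℂ]
      LinearMap.ker S.mulVecLin :=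
    LinearMap.codRestrict _ ((LinearMap.funLeft ℂ ℂ Sum.inl).comp
      (LinearMap.ker (Matrix.mulVecLin (Matrix.fromBlocks A B C D))).subtype)
      (fun v => by
        rw [LinearMap.mem_ker, mulVecLin_apply]
        exact (hproj v v.2).1)
  have hfinj : Function.Injective f := by
    intro v w hvw
    have h1 : (v : (Fin m ⊕ Fin k) → ℂ) ∘ Sum.inl = (w : (Fin m ⊕ Fin k) → ℂ) ∘ Sum.inl := by
      exact congrArg Subtype.val hvw
    have h2 : (v : (Fin m ⊕ Fin k) → ℂ) ∘ Sum.inr = (w : (Fin m ⊕ Fin k) → ℂ) ∘ Sum.inr := by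
      rw [(hproj v v.2).2, (hproj w w.2).2, h1]
    ext i
    cases i with
    | inl i => exact congrFun h1 i
    | inr i => exact congrFun h2 i
  have hle : m ≤ Module.finrank ℂ (LinearMap.ker S.mulVecLin) := by
    calc m = Module.finrank ℂ (LinearMap.ker (Matrix.mulVecLin (Matrix.fromBlocks A B C D))) :=
        hker.symm
      _ ≤ _ := LinearMap.finrank_le_finrank_of_injective hfinj
  have htop : LinearMap.ker S.mulVecLin = ⊤ := by
    apply Submodule.eq_top_of_finrank_eq
    have h2 : Module.finrank ℂ (LinearMap.ker S.mulVecLin) ≤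
        Module.finrank ℂ ((Fin m) → ℂ) := Submodule.finrank_le _
    simp only [Module.finrank_fintype_fun_eq_card, Fintype.card_fin] at h2 ⊢
    omega
  have hS0 : S = 0 := by
    ext i j
    have hx : S *ᵥ Pi.single j 1 = 0 := by
      have := LinearMap.ker_eq_top.mp htop
      exact congrFun (congrArg DFunLike.coe this) (Pi.single j 1)
    have := congrFun hx i
    simpa [mulVec_single] using this
  rw [← sub_eq_zero]; exact hS0

/-- Trace-type bound: if `H = [[Ξ, Kᴴ],[K, W]]` is Hermitian, `λ` an eigenvalue of `H`
of multiplicity `m = size Ξ`, `W − λI` invertible, and `μ₁,…,μ_m` are the eigenvalues of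
`Ξ`, then `∑ |μ_i − λ| ≤ ‖(W − λI)⁻¹‖ · ‖K‖_F²`. -/
theorem sum_abs_ritz_minus_eigenvalue_le
    {m k : ℕ} (Ξ : Matrix (Fin m) (Fin m) ℂ) (W : Matrix (Fin k) (Fin k) ℂ)
    (K : Matrix (Fin k) (Fin m) ℂ) (lam : ℝ)
    (hH : (Matrix.fromBlocks Ξ Kᴴ K W).IsHermitian)
    (hΞ : Ξ.IsHermitian)
    (hmult : Module.finrank ℂ
      (LinearMap.ker (Matrix.mulVecLin
        (Matrix.fromBlocks Ξ Kᴴ K W - (lam : ℂ) • 1))) = m)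
    (hWinv : IsUnit (W - (lam : ℂ) • 1)) :
    ∑ i, |hΞ.eigenvalues i - lam| ≤
      ‖(W - (lam : ℂ) • 1)⁻¹‖ * ∑ i, ∑ j, ‖K i j‖ ^ 2 := by
  set M := (W - (lam : ℂ) • 1)⁻¹ with hMdef
  set b := hΞ.eigenvectorBasis with hbdef
  -- block decomposition of H - λI
  have hblock : Matrix.fromBlocks Ξ Kᴴ K W - (lam : ℂ) • 1
      = Matrix.fromBlocks (Ξ - (lam : ℂ) • 1) Kᴴ K (W - (lam : ℂ) • 1) := by
    ext (i | i) (j | j) <;>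
      simp [Matrix.one_apply, Matrix.fromBlocks, Sum.inl.injEq, Sum.inr.injEq]
  -- Schur complement identity
  have hS : Ξ - (lam : ℂ) • 1 = Kᴴ * M * K := by
    apply schur_zero _ _ _ _ hWinv
    rw [← hblock]; exact hmult
  -- star b i ⬝ᵥ b i = 1
  have hunit : ∀ i, star (⇑(b i)) ⬝ᵥ ⇑(b i) = 1 := by
    intro i
    have := orthonormal_iff_ite.mp b.orthonormal i i
    rw [EuclideanSpace.inner_eq_star_dotProduct, dotProduct_comm] at this
    simpa using this
  -- key identity
  have keyC : ∀ i, ((hΞ.eigenvalues i : ℂ) - lam) =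
      star (K *ᵥ ⇑(b i)) ⬝ᵥ (M *ᵥ (K *ᵥ ⇑(b i))) := by
    intro i
    have h1 : star (⇑(b i)) ⬝ᵥ ((Ξ - (lam : ℂ) • 1) *ᵥ ⇑(b i))
        = (hΞ.eigenvalues i : ℂ) - lam := by
      rw [sub_mulVec, dotProduct_sub, hΞ.mulVec_eigenvectorBasis, smul_mulVec,
        one_mulVec, dotProduct_smul, dotProduct_smul, hunit i]
      simp [Complex.real_smul]
    have h2 : star (⇑(b i)) ⬝ᵥ ((Kᴴ * M * K) *ᵥ ⇑(b i))
        = star (K *ᵥ ⇑(b i)) ⬝ᵥ (M *ᵥ (K *ᵥ ⇑(b i))) := by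
      rw [← mulVec_mulVec, ← mulVec_mulVec, dotProduct_mulVec, ← star_mulVec]
    rw [← h1, hS, h2]
  -- norm bound on each term
  have hbound : ∀ i, |hΞ.eigenvalues i - lam|
      ≤ ‖M‖ * ‖(WithLp.equiv 2 (Fin k → ℂ)).symm (K *ᵥ ⇑(b i))‖ ^ 2 := by
    intro i
    set v : EuclideanSpace ℂ (Fin k) := (WithLp.equiv 2 (Fin k → ℂ)).symm (K *ᵥ ⇑(b i)) with hv
    have habs : |hΞ.eigenvalues i - lam| = ‖((hΞ.eigenvalues i : ℂ) - lam)‖ := by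
      rw [show ((hΞ.eigenvalues i : ℂ) - lam) = ((hΞ.eigenvalues i - lam : ℝ) : ℂ) by push_cast; ring]
      rw [Complex.norm_real, Real.norm_eq_abs]
    have hinner : ((hΞ.eigenvalues i : ℂ) - lam)
        = inner ℂ v ((WithLp.equiv 2 (Fin k → ℂ)).symm (M *ᵥ (K *ᵥ ⇑(b i)))) := by
      rw [keyC i, EuclideanSpace.inner_eq_star_dotProduct, dotProduct_comm]
      rfl
    rw [habs, hinner]
    calc ‖(inner ℂ v ((WithLp.equiv 2 (Fin k → ℂ)).symm (M *ᵥ (K *ᵥ ⇑(b i)))) : ℂ)‖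
        ≤ ‖v‖ * ‖(WithLp.equiv 2 (Fin k → ℂ)).symm (M *ᵥ (K *ᵥ ⇑(b i)))‖ :=
          norm_inner_le_norm _ _
      _ ≤ ‖v‖ * (‖M‖ * ‖v‖) := by
          apply mul_le_mul_of_nonneg_left _ (norm_nonneg v)
          exact M.l2_opNorm_mulVec ((WithLp.equiv 2 (Fin k → ℂ)).symm (K *ᵥ ⇑(b i)))
      _ = ‖M‖ * ‖v‖ ^ 2 := by ring
  -- Parseval
  have hpars : ∀ r : Fin k, ∑ i, ‖(K *ᵥ ⇑(b i)) r‖ ^ 2 = ∑ j, ‖K r j‖ ^ 2 := by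
    intro r
    set x : EuclideanSpace ℂ (Fin m) := (WithLp.equiv 2 (Fin m → ℂ)).symm (fun j => star (K r j))
      with hx
    have h1 : ∀ i, (K *ᵥ ⇑(b i)) r = inner ℂ x (b i) := by
      intro i
      rw [EuclideanSpace.inner_eq_star_dotProduct, dotProduct_comm]
      simp [hx, mulVec, dotProduct]
    have h2 : ∀ i, ‖(K *ᵥ ⇑(b i)) r‖ = ‖b.repr x i‖ := by
      intro i
      rw [h1 i, b.repr_apply_apply, ← inner_conj_symm x (b i), RCLike.norm_conj]
    have h3 : ∑ i, ‖b.repr x i‖ ^ 2 = ‖x‖ ^ 2 := by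
      rw [← b.repr.norm_map x, EuclideanSpace.norm_eq, Real.sq_sqrt]
      positivity
    have h4 : ‖x‖ ^ 2 = ∑ j, ‖K r j‖ ^ 2 := by
      rw [EuclideanSpace.norm_eq, Real.sq_sqrt]
      · simp [hx]
      · positivity
    calc ∑ i, ‖(K *ᵥ ⇑(b i)) r‖ ^ 2 = ∑ i, ‖b.repr x i‖ ^ 2 := by
          simp_rw [h2]
      _ = ∑ j, ‖K r j‖ ^ 2 := by rw [h3, h4]
  -- putting everything together
  have hsumv : ∑ i, ‖(WithLp.equiv 2 (Fin k → ℂ)).symm (K *ᵥ ⇑(b i))‖ ^ 2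
      = ∑ r, ∑ j, ‖K r j‖ ^ 2 := by
    have h5 : ∀ i, ‖(WithLp.equiv 2 (Fin k → ℂ)).symm (K *ᵥ ⇑(b i))‖ ^ 2
        = ∑ r, ‖(K *ᵥ ⇑(b i)) r‖ ^ 2 := by
      intro i
      rw [EuclideanSpace.norm_eq, Real.sq_sqrt]
      · rfl
      · positivity
    simp_rw [h5]
    rw [Finset.sum_comm]
    exact Finset.sum_congr rfl fun r _ => hpars r
  calc ∑ i, |hΞ.eigenvalues i - lam|
      ≤ ∑ i, ‖M‖ * ‖(WithLp.equiv 2 (Fin k → ℂ)).symm (K *ᵥ ⇑(b i))‖ ^ 2 :=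
        Finset.sum_le_sum fun i _ => hbound i
    _ = ‖M‖ * ∑ i, ‖(WithLp.equiv 2 (Fin k → ℂ)).symm (K *ᵥ ⇑(b i))‖ ^ 2 := by
        rw [Finset.mul_sum]
    _ = ‖M‖ * ∑ r, ∑ j, ‖K r j‖ ^ 2 := by rw [hsumv]
end

section
/- Let H be an n×n Hermitian positive definite matrix with eigenvalues λ₁ ≤ … ≤ λ_n, and let ψ be a unit vector with Rayleigh quotient μ = (ψ, Hψ). Suppose λ₁ = λ_m < λ_{m+1} for some m, μ < λ_{m+1}, and define η² = ((ψ, H⁻¹ψ) − 1/μ)/(ψ, H⁻¹ψ) for the one-dimensional projection onto span{ψ}. Then η² ≤ (μ − λ₁)/μ. -/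
open Matrix
open scoped ComplexOrder

theorem posdef_inv_spec {n : ℕ} (H : Matrix (Fin n) (Fin n) ℂ) (hH : H.PosDef) :
    H⁻¹ = (hH.isHermitian.eigenvectorUnitary : Matrix (Fin n) (Fin n) ℂ) *
      diagonal (fun i => ((hH.isHermitian.eigenvalues i : ℂ))⁻¹) *
      (star (hH.isHermitian.eigenvectorUnitary : Matrix (Fin n) (Fin n) ℂ)) := by
  apply inv_eq_right_inv
  conv_lhs => rw [mul_assoc]; lhs; rw [hH.isHermitian.spectral_theorem, Unitary.conjStarAlgAut_apply]
  set U := (hH.isHermitian.eigenvectorUnitary : Matrix (Fin n) (Fin n) ℂ) with hUdef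
  have hU1 : star U * U = 1 := (Matrix.mem_unitaryGroup_iff').mp hH.isHermitian.eigenvectorUnitary.2
  have hU2 : U * star U = 1 := (Matrix.mem_unitaryGroup_iff).mp hH.isHermitian.eigenvectorUnitary.2
  simp only [mul_assoc]
  rw [← mul_assoc (star U) U, hU1, one_mul, ← mul_assoc (diagonal _) (diagonal _),
    diagonal_mul_diagonal]
  have hd : (diagonal fun i => (RCLike.ofReal ∘ hH.isHermitian.eigenvalues) i *
      ((hH.isHermitian.eigenvalues i : ℂ))⁻¹) = (1 : Matrix (Fin n) (Fin n) ℂ) := by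
    ext i j
    rcases eq_or_ne i j with rfl | h
    · have : (hH.isHermitian.eigenvalues i : ℂ) ≠ 0 := by
        exact_mod_cast (hH.eigenvalues_pos i).ne'
      simp [diagonal_apply_eq, one_apply_eq, Function.comp, mul_inv_cancel₀ this]
    · simp [diagonal_apply_ne _ h, one_apply_ne h]
  rw [hd, one_mul, hU2]

theorem posdef_shift_psd {n : ℕ} (H : Matrix (Fin n) (Fin n) ℂ) (hH : H.PosDef) (l : ℝ)
    (hl : 0 < l) (hmin : ∀ i, l ≤ hH.isHermitian.eigenvalues i) :
    PosSemidef ((l⁻¹ : ℂ) • (1 : Matrix (Fin n) (Fin n) ℂ) - H⁻¹) := by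
  set U := (hH.isHermitian.eigenvectorUnitary : Matrix (Fin n) (Fin n) ℂ) with hUdef
  have hU2 : U * star U = 1 := (Matrix.mem_unitaryGroup_iff).mp hH.isHermitian.eigenvectorUnitary.2
  have hrep : (l⁻¹ : ℂ) • (1 : Matrix (Fin n) (Fin n) ℂ) - H⁻¹ =
      U * diagonal (fun i => ((l⁻¹ - (hH.isHermitian.eigenvalues i)⁻¹ : ℝ) : ℂ)) * star U := by
    rw [posdef_inv_spec H hH]
    have : (diagonal (fun i => ((l⁻¹ - (hH.isHermitian.eigenvalues i)⁻¹ : ℝ) : ℂ))) =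
        (l⁻¹ : ℂ) • (1 : Matrix (Fin n) (Fin n) ℂ) -
          diagonal (fun i => ((hH.isHermitian.eigenvalues i : ℂ))⁻¹) := by
      rw [smul_one_eq_diagonal, diagonal_sub]
      congr 1
      funext i
      push_cast
      ring
    rw [this, mul_sub, sub_mul]
    congr 1
    rw [mul_smul_comm, smul_mul_assoc, mul_one, hU2]
  rw [hrep]
  have hdiag : PosSemidef (diagonal
      (fun i => ((l⁻¹ - (hH.isHermitian.eigenvalues i)⁻¹ : ℝ) : ℂ))) := by
    refine posSemidef_diagonal_iff.mpr fun i => ?_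
    rw [Complex.zero_le_real, sub_nonneg]
    exact inv_anti₀ hl (hmin i)
  simpa [star_eq_conjTranspose] using hdiag.mul_mul_conjTranspose_same U

/-- Lower estimate: for `H` Hermitian positive definite with sorted eigenvalues `e`,
`λ₁ = λ_m < λ_{m+1}`, a unit vector `ψ` with Rayleigh quotient `μ < λ_{m+1}`, the relative
approximation defect `η² = ((ψ,H⁻¹ψ) − 1/μ)/(ψ,H⁻¹ψ)` satisfies `η² ≤ (μ − λ₁)/μ`. -/
theorem relative_defect_le_relative_error
    {n : ℕ} (H : Matrix (Fin n) (Fin n) ℂ) (hH : H.PosDef)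
    (e : Fin n → ℝ) (σ : Equiv.Perm (Fin n))
    (he : ∀ i, e i = hH.isHermitian.eigenvalues (σ i)) (hmono : Monotone e)
    (m : ℕ) (hm0 : 0 < m) (hmn : m < n)
    (ψ : Fin n → ℂ) (hψ : dotProduct (star ψ) ψ = 1)
    (μ : ℝ) (hμ : μ = (dotProduct (star ψ) (H.mulVec ψ)).re)
    (hlam : e ⟨0, by omega⟩ = e ⟨m - 1, by omega⟩)
    (hgap : e ⟨m - 1, by omega⟩ < e ⟨m, hmn⟩)
    (hμlt : μ < e ⟨m, hmn⟩) :
    ((dotProduct (star ψ) (H⁻¹.mulVec ψ)).re - 1 / μ) /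
        (dotProduct (star ψ) (H⁻¹.mulVec ψ)).re ≤
      (μ - e ⟨0, by omega⟩) / μ := by
  have hn0 : 0 < n := by omega
  set l : ℝ := e ⟨0, by omega⟩ with hl_def
  have hmin : ∀ i, l ≤ hH.isHermitian.eigenvalues i := by
    intro i
    have h1 : l ≤ e (σ.symm i) := hmono (by simp [Fin.le_def])
    rwa [he (σ.symm i), Equiv.apply_symm_apply] at h1
  have hlpos : 0 < l := by
    have := hH.eigenvalues_pos (σ ⟨0, hn0⟩)
    rw [hl_def, he]
    exact this
  have hψ0 : ψ ≠ 0 := by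
    intro h
    rw [h] at hψ
    simp at hψ
  have hμpos : 0 < μ := hμ ▸ hH.re_dotProduct_pos hψ0
  set p : ℝ := (dotProduct (star ψ) (H⁻¹.mulVec ψ)).re with hp_def
  have hppos : 0 < p := hH.inv.re_dotProduct_pos hψ0
  -- key inequality : l * p ≤ 1
  have hpsd := posdef_shift_psd H hH l hlpos hmin
  have hkey : p ≤ l⁻¹ := by
    have h0 := hpsd.re_dotProduct_nonneg ψ
    rw [sub_mulVec, smul_mulVec, one_mulVec, dotProduct_sub, dotProduct_smul,
      hψ, smul_eq_mul, mul_one] at h0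
    simp only [RCLike.re_to_complex, ← Complex.ofReal_inv, Complex.sub_re,
      Complex.ofReal_re] at h0
    linarith
  have hlp : l * p ≤ 1 := by
    calc l * p ≤ l * l⁻¹ := by nlinarith
    _ = 1 := mul_inv_cancel₀ hlpos.ne'
  rw [div_le_div_iff₀ hppos hμpos]
  have h1 : (p - 1 / μ) * μ = p * μ - 1 := by field_simp
  rw [h1]
  nlinarith
end

section
/- Let H be Hermitian positive definite with smallest eigenvalue λ₁ of multiplicity m and next eigenvalue λ_{m+1} > λ₁. Let P be a rank-m orthogonal projection with Ritz values μ₁ ≤ … ≤ μ_m (eigenvalues of the compression Ξ = P H P restricted to ran P), and suppose μ_m < λ_{m+1}. With η_i the approximation defects (singular values of the scaled off-diagonal block K_s of H_P^{−1/2} H H_P^{−1/2}), one has ∑_{i=1}^m η_i² ≤ ∑_{i=1}^m (μ_i − λ_i)/μ_i ≤ (1/𝔤₁) ∑_{i=1}^m η_i², where 𝔤₁ = min{|λ₁ − ν|/ν : ν eigenvalue of H_P other than μ₁,…,μ_m}. -/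
open Matrix
open scoped ComplexOrder

/-- The positive semidefinite square root of a positive semidefinite matrix, as defined in the
older Mathlib (removed since). -/
noncomputable def Matrix.PosSemidef.sqrt {n 𝕜 : Type*} [Fintype n] [RCLike 𝕜] [DecidableEq n]
    {A : Matrix n n 𝕜} (hA : A.PosSemidef) : Matrix n n 𝕜 :=
  (hA.isHermitian.eigenvectorUnitary : Matrix n n 𝕜) *
    diagonal ((fun x : ℝ => (x : 𝕜)) ∘ (√·) ∘ hA.isHermitian.eigenvalues) *
    (star hA.isHermitian.eigenvectorUnitary : Matrix n n 𝕜)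

section Helpers

set_option linter.unusedSectionVars false

variable {n : Type*} [Fintype n] [DecidableEq n]

private lemma star_mul_self_normSq (z : ℂ) : star z * z = (Complex.normSq z : ℂ) := by
  rw [RCLike.star_def, mul_comm, Complex.mul_conj]

private lemma quad_expand {A : Matrix n n ℂ} (hA : A.IsHermitian) (x : n → ℂ) :
    star x ⬝ᵥ A *ᵥ x =
      ((∑ j, hA.eigenvalues j *
        Complex.normSq ((star (hA.eigenvectorUnitary : Matrix n n ℂ) *ᵥ x) j) : ℝ) : ℂ) := by
  set U : Matrix n n ℂ := (hA.eigenvectorUnitary : Matrix n n ℂ) with hU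
  set y := star U *ᵥ x with hy
  have h1 : star x ᵥ* U = star y := by
    rw [hy, star_mulVec, Matrix.star_eq_conjTranspose, conjTranspose_conjTranspose]
  conv_lhs => rw [hA.spectral_theorem]
  rw [Unitary.conjStarAlgAut_apply]
  rw [← mulVec_mulVec, ← mulVec_mulVec, dotProduct_mulVec, h1, ← hy]
  simp only [dotProduct, mulVec_diagonal, Function.comp_apply, RCLike.ofReal_alg]
  push_cast
  refine Finset.sum_congr rfl fun j _ => ?_
  simp only [Pi.star_apply, Complex.real_smul, mul_one]
  rw [show star (y j) * ((hA.eigenvalues j : ℂ) * y j)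
      = (hA.eigenvalues j : ℂ) * (star (y j) * y j) by ring, star_mul_self_normSq]

private lemma norm_expand {A : Matrix n n ℂ} (hA : A.IsHermitian) (x : n → ℂ) :
    star x ⬝ᵥ x =
      ((∑ j, Complex.normSq ((star (hA.eigenvectorUnitary : Matrix n n ℂ) *ᵥ x) j) : ℝ) : ℂ) := by
  set U : Matrix n n ℂ := (hA.eigenvectorUnitary : Matrix n n ℂ) with hU
  set y := star U *ᵥ x with hy
  have h1 : star x ᵥ* U = star y := by
    rw [hy, star_mulVec, Matrix.star_eq_conjTranspose, conjTranspose_conjTranspose]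
  have hUU : U * star U = 1 := Matrix.mem_unitaryGroup_iff.mp hA.eigenvectorUnitary.2
  have h2 : star y ⬝ᵥ y = star x ⬝ᵥ x := by
    rw [hy, ← h1, ← dotProduct_mulVec, mulVec_mulVec, hUU, one_mulVec]
  rw [← h2]
  simp only [dotProduct, Pi.star_apply]
  push_cast
  exact Finset.sum_congr rfl fun j _ => star_mul_self_normSq _

private lemma star_dot_self (x : n → ℂ) :
    star x ⬝ᵥ x = ((∑ i, Complex.normSq (x i) : ℝ) : ℂ) := by
  simp only [dotProduct, Pi.star_apply]
  push_cast
  exact Finset.sum_congr rfl fun j _ => star_mul_self_normSq _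

private lemma sum_normSq_pos {x : n → ℂ} (hx : x ≠ 0) :
    0 < ∑ i, Complex.normSq (x i) := by
  obtain ⟨i, hi⟩ := Function.ne_iff.mp hx
  exact Finset.sum_pos' (fun j _ => Complex.normSq_nonneg _)
    ⟨i, Finset.mem_univ i, by simpa using Complex.normSq_pos.mpr hi⟩

private lemma eigencoord_recon {A : Matrix n n ℂ} (hA : A.IsHermitian) (x : n → ℂ) :
    (hA.eigenvectorUnitary : Matrix n n ℂ) *ᵥ
      (star (hA.eigenvectorUnitary : Matrix n n ℂ) *ᵥ x) = x := by
  rw [mulVec_mulVec, Matrix.mem_unitaryGroup_iff.mp hA.eigenvectorUnitary.2, one_mulVec]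

private lemma trace_re_nonneg {A : Matrix n n ℂ} (hA : A.PosSemidef) : 0 ≤ A.trace.re := by
  have h : ∀ i, 0 ≤ (A i i).re := by
    intro i
    have h1 := hA.dotProduct_mulVec_nonneg (Pi.single i 1)
    have h2 : star (Pi.single i 1 : n → ℂ) ⬝ᵥ A *ᵥ (Pi.single i 1) = A i i := by
      simp [dotProduct, mulVec, Pi.single_apply, apply_ite, Finset.sum_ite_eq]
    rw [h2] at h1
    have := (Complex.le_def.mp h1).1
    simpa using this
  rw [Matrix.trace]
  simpa [Matrix.diag] using Finset.sum_nonneg fun i (_ : i ∈ Finset.univ) => h i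

private lemma conj_diag_psd (V : Matrix n n ℂ) (d : n → ℝ) (hd : ∀ i, 0 ≤ d i) :
    (V * diagonal (fun i => (d i : ℂ)) * Vᴴ).PosSemidef := by
  have h : (diagonal (fun i => (d i : ℂ))).PosSemidef :=
    posSemidef_diagonal_iff.mpr fun i => by
      simpa using Complex.zero_le_real.mpr (hd i)
  exact h.mul_mul_conjTranspose_same V

private lemma conj_diag_mul (V : Matrix n n ℂ) (hV2 : Vᴴ * V = 1) (d d' : n → ℂ) :
    (V * diagonal d * Vᴴ) * (V * diagonal d' * Vᴴ)
      = V * diagonal (fun i => d i * d' i) * Vᴴ := by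
  calc V * diagonal d * Vᴴ * (V * diagonal d' * Vᴴ)
      = V * diagonal d * (Vᴴ * V) * (diagonal d' * Vᴴ) := by
        simp only [Matrix.mul_assoc]
    _ = V * (diagonal d * diagonal d') * Vᴴ := by
        rw [hV2]; simp only [Matrix.mul_one, Matrix.mul_assoc]
    _ = V * diagonal (fun i => d i * d' i) * Vᴴ := by rw [diagonal_mul_diagonal]

private lemma conj_diag_inv (V : Matrix n n ℂ) (hV : V * Vᴴ = 1) (hV2 : Vᴴ * V = 1)
    (d : n → ℂ) (hd : ∀ i, d i ≠ 0) :
    (V * diagonal d * Vᴴ)⁻¹ = V * diagonal (fun i => (d i)⁻¹) * Vᴴ := by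
  apply inv_eq_right_inv
  rw [conj_diag_mul V hV2]
  have : (fun i => d i * (d i)⁻¹) = fun _ => (1:ℂ) := by
    funext i; exact mul_inv_cancel₀ (hd i)
  rw [this, diagonal_one, Matrix.mul_one, hV]

private lemma conj_diag_trace (V : Matrix n n ℂ) (hV2 : Vᴴ * V = 1) (d : n → ℂ) :
    (V * diagonal d * Vᴴ).trace = ∑ i, d i := by
  rw [trace_mul_comm, ← Matrix.mul_assoc, hV2, Matrix.one_mul, trace_diagonal]

private lemma spectral_conj {A : Matrix n n ℂ} (hA : A.IsHermitian) :
    A = (hA.eigenvectorUnitary : Matrix n n ℂ) *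
      diagonal (fun i => (hA.eigenvalues i : ℂ)) *
        (hA.eigenvectorUnitary : Matrix n n ℂ)ᴴ := by
  conv_lhs => rw [hA.spectral_theorem]
  rw [Unitary.conjStarAlgAut_apply, Matrix.star_eq_conjTranspose]
  rfl

lemma Matrix.PosSemidef.posSemidef_sqrt {A : Matrix n n ℂ} (hA : A.PosSemidef) :
    hA.sqrt.PosSemidef := by
  unfold Matrix.PosSemidef.sqrt
  rw [Matrix.star_eq_conjTranspose]
  exact conj_diag_psd _ (fun i => √(hA.isHermitian.eigenvalues i)) fun i => Real.sqrt_nonneg _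

lemma Matrix.PosSemidef.sqrt_mul_self {A : Matrix n n ℂ} (hA : A.PosSemidef) :
    hA.sqrt * hA.sqrt = A := by
  have hV2 : (hA.isHermitian.eigenvectorUnitary : Matrix n n ℂ)ᴴ *
      (hA.isHermitian.eigenvectorUnitary : Matrix n n ℂ) = 1 := by
    have h := Matrix.mem_unitaryGroup_iff'.mp hA.isHermitian.eigenvectorUnitary.2
    rwa [Matrix.star_eq_conjTranspose] at h
  unfold Matrix.PosSemidef.sqrt
  rw [Matrix.star_eq_conjTranspose, conj_diag_mul _ hV2]
  conv_rhs => rw [spectral_conj hA.isHermitian]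
  congr 2
  congr 1
  funext i
  simp only [Function.comp_apply]
  rw [← RCLike.ofReal_mul, Real.mul_self_sqrt (hA.eigenvalues_nonneg i)]
  rfl

end Helpers

set_option maxHeartbeats 2000000

/-- Two-sided trace estimate (Theorem 3.3): in block coordinates where `P` projects onto the
first `m` coordinates, `H = [[Ξ, Kᴴ],[K, W]]` is positive definite with sorted eigenvalues
`e`, `λ₁ = … = λ_m < λ_{m+1}`, Ritz values `μ₁ ≤ … ≤ μ_m` (eigenvalues of `Ξ`) with
`μ_m < λ_{m+1}`, scaled off-diagonal block `K_s = W^{−1/2} K Ξ^{−1/2}` whose squared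
singular values sum to `S = tr(K_sᴴ K_s)`, and relative gap
`𝔤₁ = min over eigenvalues ν of W of |λ₁ − ν|/ν`, one has
`S ≤ ∑ (μ_i − λ_i)/μ_i ≤ S/𝔤₁`. -/
theorem two_sided_trace_estimate
    {m k : ℕ} (hm : 0 < m) (hk : 0 < k)
    (Ξ : Matrix (Fin m) (Fin m) ℂ) (W : Matrix (Fin k) (Fin k) ℂ)
    (K : Matrix (Fin k) (Fin m) ℂ)
    (hΞ : Ξ.PosDef) (hW : W.PosDef)
    (hH : (Matrix.fromBlocks Ξ Kᴴ K W).PosDef)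
    (e : Fin (m + k) → ℝ) (σ : Fin (m + k) ≃ (Fin m ⊕ Fin k))
    (he : ∀ i, e i = hH.isHermitian.eigenvalues (σ i)) (hmono : Monotone e)
    (hlam : ∀ i : Fin (m + k), (i : ℕ) < m → e i = e ⟨0, by omega⟩)
    (hgap : e ⟨m - 1, by omega⟩ < e ⟨m, by omega⟩)
    (μ : Fin m → ℝ) (τ : Equiv.Perm (Fin m))
    (hμ : ∀ i, μ i = hΞ.isHermitian.eigenvalues (τ i)) (hμmono : Monotone μ)
    (hμm : μ ⟨m - 1, by omega⟩ < e ⟨m, by omega⟩)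
    (Ks : Matrix (Fin k) (Fin m) ℂ)
    (hKs : Ks = (hW.posSemidef.sqrt)⁻¹ * K * (hΞ.posSemidef.sqrt)⁻¹)
    (S : ℝ) (hS : S = ((Ksᴴ * Ks).trace).re)
    (g1 : ℝ)
    (hg1 : g1 = Finset.univ.inf' (Finset.univ_nonempty_iff.mpr ⟨⟨0, hk⟩⟩)
      (fun i => |e ⟨0, by omega⟩ - hW.isHermitian.eigenvalues i| /
        hW.isHermitian.eigenvalues i)) :
    S ≤ (∑ i : Fin m, (μ i - e ⟨0, by omega⟩) / μ i) ∧
      (∑ i : Fin m, (μ i - e ⟨0, by omega⟩) / μ i) ≤ S / g1 := by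
  classical
  set H : Matrix (Fin m ⊕ Fin k) (Fin m ⊕ Fin k) ℂ := Matrix.fromBlocks Ξ Kᴴ K W with hHdef
  set hHh := hH.isHermitian with hHhdef
  set l1 : ℝ := e ⟨0, by omega⟩ with hl1def
  set im : Fin (m + k) := ⟨m, by omega⟩ with himdef
  set UH : Matrix (Fin m ⊕ Fin k) (Fin m ⊕ Fin k) ℂ :=
    (hHh.eigenvectorUnitary : Matrix (Fin m ⊕ Fin k) (Fin m ⊕ Fin k) ℂ) with hUHdef
  set emb : Fin m → Fin (m + k) := fun j => ⟨j.val, by omega⟩ with hembdef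
  -- basic eigenvalue facts
  have heig : ∀ p, hHh.eigenvalues p = e (σ.symm p) := fun p => by
    rw [he (σ.symm p), Equiv.apply_symm_apply]
  have hl1pos : 0 < l1 := by rw [hl1def, he]; exact hH.eigenvalues_pos _
  have hl1le : ∀ p, l1 ≤ hHh.eigenvalues p := fun p => by
    rw [heig]; exact hmono (by simp [Fin.le_def])
  have hemle : ∀ p, m ≤ ((σ.symm p : Fin (m + k)) : ℕ) → e im ≤ hHh.eigenvalues p := by
    intro p hp
    rw [heig]
    exact hmono (show im ≤ σ.symm p from by rw [Fin.le_def]; exact hp)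
  have heiglt : ∀ i : Fin (m + k), (i : ℕ) < m → hHh.eigenvalues (σ i) = l1 := fun i h => by
    rw [← he]; exact hlam i h
  have hl1em : l1 < e im := by
    have h1 := hlam ⟨m - 1, by omega⟩ (Nat.sub_lt hm one_pos)
    exact lt_of_eq_of_lt h1.symm hgap
  have hμpos : ∀ i, 0 < μ i := fun i => by rw [hμ]; exact hΞ.eigenvalues_pos _
  have hμmax : ∀ q, hΞ.isHermitian.eigenvalues q ≤ μ ⟨m - 1, by omega⟩ := by
    intro q
    have h1 : hΞ.isHermitian.eigenvalues q = μ (τ.symm q) := by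
      rw [hμ (τ.symm q), Equiv.apply_symm_apply]
    rw [h1]
    refine hμmono ?_
    have := (τ.symm q).isLt
    simp only [Fin.le_def]
    omega
  -- the coordinate matrix of the first components of the ground eigenvectors
  set P : Matrix (Fin m) (Fin m) ℂ :=
    fun i j => (hHh.eigenvectorBasis (σ (emb j)) : (Fin m ⊕ Fin k) → ℂ) (Sum.inl i) with hPdef
  have hPdet : P.det ≠ 0 := by
    intro hdet
    have hdetH : Pᴴ.det = 0 := by
      rw [Matrix.det_conjTranspose, hdet, star_zero]
    obtain ⟨x, hx0, hx⟩ := Matrix.exists_mulVec_eq_zero_iff.mpr hdetH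
    set v : (Fin m ⊕ Fin k) → ℂ := Sum.elim x 0 with hvdef
    set yv : (Fin m ⊕ Fin k) → ℂ := star UH *ᵥ v with hyvdef
    have hC1 : ∀ j : Fin m, yv (σ (emb j)) = 0 := by
      intro j
      have h2 : yv (σ (emb j)) = (Pᴴ *ᵥ x) j := by
        rw [hyvdef, hvdef]
        simp only [mulVec, dotProduct, Matrix.star_apply, Matrix.conjTranspose_apply]
        rw [Fintype.sum_sum_type]
        simp [hUHdef, Matrix.IsHermitian.eigenvectorUnitary_apply, hPdef]
      rw [h2, hx, Pi.zero_apply]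
    have hsupp : ∀ p, ((σ.symm p : Fin (m + k)) : ℕ) < m → yv p = 0 := by
      intro p hp
      have h3 : σ (emb ⟨((σ.symm p : Fin (m + k)) : ℕ), hp⟩) = p := by
        have h4 : emb ⟨((σ.symm p : Fin (m + k)) : ℕ), hp⟩ = σ.symm p := Fin.ext rfl
        rw [h4, Equiv.apply_symm_apply]
      rw [← h3]; exact hC1 _
    have hlow : e im * (∑ p, Complex.normSq (yv p))
        ≤ ∑ p, hHh.eigenvalues p * Complex.normSq (yv p) := by
      rw [Finset.mul_sum]
      refine Finset.sum_le_sum fun p _ => ?_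
      by_cases hp : ((σ.symm p : Fin (m + k)) : ℕ) < m
      · rw [hsupp p hp]; simp
      · exact mul_le_mul_of_nonneg_right (hemle p (le_of_not_gt hp)) (Complex.normSq_nonneg _)
    have hHv : H *ᵥ v = Sum.elim (Ξ *ᵥ x) (K *ᵥ x) := by
      rw [hvdef, hHdef, Matrix.fromBlocks_mulVec]
      simp
    have hupper : star v ⬝ᵥ H *ᵥ v = star x ⬝ᵥ Ξ *ᵥ x := by
      rw [hHv, hvdef]
      simp [dotProduct, Fintype.sum_sum_type]
    have hnormv : star v ⬝ᵥ v = star x ⬝ᵥ x := by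
      rw [hvdef]
      simp [dotProduct, Fintype.sum_sum_type]
    have hQH := quad_expand hHh v
    have hNH := norm_expand hHh v
    have hQΞ := quad_expand hΞ.isHermitian x
    have hNΞ := norm_expand hΞ.isHermitian x
    have hNx := star_dot_self x
    have hxpos : 0 < ∑ i, Complex.normSq (x i) := sum_normSq_pos hx0
    have h6 : (∑ q, Complex.normSq
        ((star (hΞ.isHermitian.eigenvectorUnitary : Matrix (Fin m) (Fin m) ℂ) *ᵥ x) q))
        = ∑ i, Complex.normSq (x i) := by
      have := hNΞ.symm.trans hNx
      exact_mod_cast this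
    have h7 : (∑ p, Complex.normSq (yv p)) = ∑ i, Complex.normSq (x i) := by
      have := (hNH.symm.trans (hnormv.trans hNx))
      exact_mod_cast this
    have h8 : (∑ p, hHh.eigenvalues p * Complex.normSq (yv p))
        = ∑ q, hΞ.isHermitian.eigenvalues q * Complex.normSq
          ((star (hΞ.isHermitian.eigenvectorUnitary : Matrix (Fin m) (Fin m) ℂ) *ᵥ x) q) := by
      have := (hQH.symm.trans (hupper.trans hQΞ))
      exact_mod_cast this
    have h9 : (∑ q, hΞ.isHermitian.eigenvalues q * Complex.normSq
          ((star (hΞ.isHermitian.eigenvectorUnitary : Matrix (Fin m) (Fin m) ℂ) *ᵥ x) q))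
        ≤ μ ⟨m - 1, by omega⟩ * ∑ i, Complex.normSq (x i) := by
      rw [← h6, Finset.mul_sum]
      exact Finset.sum_le_sum fun q _ =>
        mul_le_mul_of_nonneg_right (hμmax q) (Complex.normSq_nonneg _)
    have h10 : e im * (∑ i, Complex.normSq (x i))
        ≤ μ ⟨m - 1, by omega⟩ * ∑ i, Complex.normSq (x i) := by
      calc e im * (∑ i, Complex.normSq (x i)) = e im * (∑ p, Complex.normSq (yv p)) := by
            rw [h7]
        _ ≤ ∑ p, hHh.eigenvalues p * Complex.normSq (yv p) := hlow
        _ ≤ μ ⟨m - 1, by omega⟩ * ∑ i, Complex.normSq (x i) := by rw [h8]; exact h9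
    have h11 : e im ≤ μ ⟨m - 1, by omega⟩ := le_of_mul_le_mul_right h10 hxpos
    exact absurd h11 (not_le.mpr hμm)
  -- all eigenvalues of W exceed l1
  have hν : ∀ i, l1 < hW.isHermitian.eigenvalues i := by
    intro i
    by_contra hle
    push_neg at hle
    set y : Fin k → ℂ := (hW.isHermitian.eigenvectorBasis i : Fin k → ℂ) with hydef
    have hy0 : y ≠ 0 := by
      intro h0
      have : hW.isHermitian.eigenvectorBasis i = 0 := by
        ext j
        exact congrFun h0 j
      exact hW.isHermitian.eigenvectorBasis.orthonormal.ne_zero i this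
    set v : (Fin m ⊕ Fin k) → ℂ := Sum.elim 0 y with hvdef
    set yv : (Fin m ⊕ Fin k) → ℂ := star UH *ᵥ v with hyvdef
    have hWy : W *ᵥ y = (hW.isHermitian.eigenvalues i : ℂ) • y := by
      funext j
      have hj := congrFun (hW.isHermitian.mulVec_eigenvectorBasis i) j
      simp only [Pi.smul_apply] at hj
      exact hj.trans (by simp [Complex.real_smul, Pi.smul_apply, smul_eq_mul, hydef])
    have hHv : H *ᵥ v = Sum.elim (Kᴴ *ᵥ y) (W *ᵥ y) := by
      rw [hvdef, hHdef, Matrix.fromBlocks_mulVec]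
      simp
    have hqv : star v ⬝ᵥ H *ᵥ v = (hW.isHermitian.eigenvalues i : ℂ) * (star y ⬝ᵥ y) := by
      rw [hHv, hvdef]
      simp [dotProduct, Fintype.sum_sum_type, hWy, Finset.mul_sum, mul_left_comm]
    have hnormv : star v ⬝ᵥ v = star y ⬝ᵥ y := by
      rw [hvdef]
      simp [dotProduct, Fintype.sum_sum_type]
    have hQH := quad_expand hHh v
    have hNH := norm_expand hHh v
    have hNy := star_dot_self y
    have hypos : 0 < ∑ j, Complex.normSq (y j) := sum_normSq_pos hy0
    have h7 : (∑ p, Complex.normSq (yv p)) = ∑ j, Complex.normSq (y j) := by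
      have := (hNH.symm.trans (hnormv.trans hNy))
      exact_mod_cast this
    have h8 : (∑ p, hHh.eigenvalues p * Complex.normSq (yv p))
        = hW.isHermitian.eigenvalues i * ∑ j, Complex.normSq (y j) := by
      have h8a : star v ⬝ᵥ H *ᵥ v
          = (((hW.isHermitian.eigenvalues i * ∑ j, Complex.normSq (y j) : ℝ)) : ℂ) := by
        rw [hqv, hNy]
        push_cast
        ring
      have := (hQH.symm.trans h8a)
      exact_mod_cast this
    -- each term of the nonnegative sum must vanish
    have hsum0 : ∑ p, (hHh.eigenvalues p - l1) * Complex.normSq (yv p) = 0 := by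
      have hexp : ∑ p, (hHh.eigenvalues p - l1) * Complex.normSq (yv p)
          = (∑ p, hHh.eigenvalues p * Complex.normSq (yv p))
            - l1 * ∑ p, Complex.normSq (yv p) := by
        rw [Finset.mul_sum, ← Finset.sum_sub_distrib]
        exact Finset.sum_congr rfl fun p _ => by ring
      have hle2 : ∑ p, (hHh.eigenvalues p - l1) * Complex.normSq (yv p) ≤ 0 := by
        rw [hexp, h8, h7]
        nlinarith [hypos]
      have hge2 : 0 ≤ ∑ p, (hHh.eigenvalues p - l1) * Complex.normSq (yv p) :=
        Finset.sum_nonneg fun p _ =>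
          mul_nonneg (sub_nonneg.mpr (hl1le p)) (Complex.normSq_nonneg _)
      linarith
    have heach : ∀ p, (hHh.eigenvalues p - l1) * Complex.normSq (yv p) = 0 := by
      have := (Finset.sum_eq_zero_iff_of_nonneg fun p _ =>
        mul_nonneg (sub_nonneg.mpr (hl1le p)) (Complex.normSq_nonneg _)).mp hsum0
      exact fun p => this p (Finset.mem_univ p)
    have hsupp2 : ∀ p, m ≤ ((σ.symm p : Fin (m + k)) : ℕ) → yv p = 0 := by
      intro p hp
      have h1 : e im ≤ hHh.eigenvalues p := hemle p hp
      have h2 : hHh.eigenvalues p - l1 ≠ 0 := by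
        have := hl1em
        intro h; rw [sub_eq_zero] at h; linarith
      have := heach p
      rcases mul_eq_zero.mp this with h | h
      · exact absurd h h2
      · exact Complex.normSq_eq_zero.mp h
    have hrecon : v = UH *ᵥ yv := by
      rw [hyvdef, hUHdef, eigencoord_recon hHh v]
    set c : Fin m → ℂ := fun j => yv (σ (emb j)) with hcdef
    have hPc : P *ᵥ c = 0 := by
      funext i'
      have h0 : v (Sum.inl i') = 0 := by rw [hvdef]; rfl
      have h1 : (UH *ᵥ yv) (Sum.inl i') = ∑ p, UH (Sum.inl i') p * yv p := rfl
      have h2 : ∑ p, UH (Sum.inl i') p * yv p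
          = ∑ q : Fin (m + k), UH (Sum.inl i') (σ q) * yv (σ q) :=
        (Fintype.sum_equiv σ _ _ fun q => rfl).symm
      have h3 : ∑ q : Fin (m + k), UH (Sum.inl i') (σ q) * yv (σ q)
          = ∑ j : Fin m, UH (Sum.inl i') (σ (emb j)) * yv (σ (emb j)) := by
        rw [Fin.sum_univ_add (f := fun q : Fin (m + k) => UH (Sum.inl i') (σ q) * yv (σ q))]
        have h4 : ∀ j : Fin k, UH (Sum.inl i') (σ (Fin.natAdd m j)) * yv (σ (Fin.natAdd m j)) = 0 := by
          intro j
          rw [hsupp2 (σ (Fin.natAdd m j))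
            (by rw [Equiv.symm_apply_apply]; exact Nat.le_add_right m j), mul_zero]
        rw [Finset.sum_congr rfl fun j _ => h4 j]
        simp only [Finset.sum_const_zero, add_zero]
        refine Finset.sum_congr rfl fun j _ => ?_
        have : Fin.castAdd k j = emb j := Fin.ext rfl
        rw [this]
      have h5 : ∑ j : Fin m, UH (Sum.inl i') (σ (emb j)) * yv (σ (emb j))
          = (P *ᵥ c) i' := by
        simp only [mulVec, dotProduct, hcdef]
        refine Finset.sum_congr rfl fun j _ => ?_
        congr 1
      rw [← h5, ← h3, ← h2, ← h1, ← hrecon, h0, Pi.zero_apply]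
    have hc0 : c = 0 := by
      by_contra hc
      exact hPdet (Matrix.exists_mulVec_eq_zero_iff.mp ⟨c, hc, hPc⟩)
    have hyv0 : yv = 0 := by
      funext p
      by_cases hp : ((σ.symm p : Fin (m + k)) : ℕ) < m
      · have h3 : σ (emb ⟨((σ.symm p : Fin (m + k)) : ℕ), hp⟩) = p := by
          have h4 : emb ⟨((σ.symm p : Fin (m + k)) : ℕ), hp⟩ = σ.symm p := Fin.ext rfl
          rw [h4, Equiv.apply_symm_apply]
        have := congrFun hc0 ⟨((σ.symm p : Fin (m + k)) : ℕ), hp⟩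
        rw [hcdef] at this
        simpa [h3] using this
      · exact hsupp2 p (le_of_not_gt hp)
    have : v = 0 := by rw [hrecon, hyv0, mulVec_zero]
    have : y = 0 := by
      funext j
      have := congrFun this (Sum.inr j)
      simpa [hvdef] using this
    exact hy0 this
  -- spectral form of W
  set V : Matrix (Fin k) (Fin k) ℂ :=
    (hW.isHermitian.eigenvectorUnitary : Matrix (Fin k) (Fin k) ℂ) with hVdef
  set ν : Fin k → ℝ := hW.isHermitian.eigenvalues with hνdef
  have hVV : V * Vᴴ = 1 := by
    have h := Matrix.mem_unitaryGroup_iff.mp hW.isHermitian.eigenvectorUnitary.2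
    rwa [Matrix.star_eq_conjTranspose] at h
  have hV'V : Vᴴ * V = 1 := by
    have h := Matrix.mem_unitaryGroup_iff'.mp hW.isHermitian.eigenvectorUnitary.2
    rwa [Matrix.star_eq_conjTranspose] at h
  have hνpos : ∀ i, 0 < ν i := fun i => hW.eigenvalues_pos i
  have hWspec : W = V * diagonal (fun i => (ν i : ℂ)) * Vᴴ := spectral_conj hW.isHermitian
  have hsmul1 : ∀ c : ℂ, c • (1 : Matrix (Fin k) (Fin k) ℂ) = V * diagonal (fun _ => c) * Vᴴ := by
    intro c
    calc c • (1 : Matrix (Fin k) (Fin k) ℂ) = c • (V * Vᴴ) := by rw [hVV]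
      _ = V * (c • (1 : Matrix (Fin k) (Fin k) ℂ)) * Vᴴ := by
          rw [Matrix.mul_smul, Matrix.smul_mul, Matrix.mul_one]
      _ = V * diagonal (fun _ => c) * Vᴴ := by rw [Matrix.smul_one_eq_diagonal]
  have hWl : W - (l1 : ℂ) • 1 = V * diagonal (fun i => ((ν i - l1 : ℝ) : ℂ)) * Vᴴ := by
    rw [hWspec, hsmul1 ((l1 : ℝ) : ℂ), ← Matrix.sub_mul, ← Matrix.mul_sub,
      Matrix.diagonal_sub]
    have hfun : (fun i => (ν i : ℂ) - ((l1 : ℝ) : ℂ)) = fun i => ((ν i - l1 : ℝ) : ℂ) := by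
      funext i; push_cast; ring
    rw [hfun]
  have hνl1ne : ∀ i, ((ν i - l1 : ℝ) : ℂ) ≠ 0 := fun i =>
    Complex.ofReal_ne_zero.mpr (sub_ne_zero.mpr (ne_of_gt (hν i)))
  have hWlinv : (W - (l1 : ℂ) • 1)⁻¹
      = V * diagonal (fun i => (((ν i - l1)⁻¹ : ℝ) : ℂ)) * Vᴴ := by
    rw [hWl, conj_diag_inv V hVV hV'V _ hνl1ne]
    have hfun : (fun i => (((ν i - l1 : ℝ) : ℂ))⁻¹) = fun i => (((ν i - l1)⁻¹ : ℝ) : ℂ) := by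
      funext i; push_cast; simp
    rw [hfun]
  have hWlmul : (W - (l1 : ℂ) • 1)⁻¹ * (W - (l1 : ℂ) • 1) = 1 := by
    rw [hWlinv, hWl, conj_diag_mul V hV'V]
    have hfun : (fun i => ((((ν i - l1)⁻¹ : ℝ) : ℂ)) * (((ν i - l1 : ℝ) : ℂ)))
        = fun _ => (1 : ℂ) := by
      funext i
      rw [← Complex.ofReal_mul, inv_mul_cancel₀ (sub_ne_zero.mpr (ne_of_gt (hν i))),
        Complex.ofReal_one]
    rw [hfun, diagonal_one, Matrix.mul_one, hVV]
  -- the key identity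
  have hWlkey : Kᴴ * (W - (l1 : ℂ) • 1)⁻¹ * K = Ξ - (l1 : ℂ) • 1 := by
    have hcol : ∀ j : Fin m,
        ((Ξ - (l1 : ℂ) • 1) - Kᴴ * (W - (l1 : ℂ) • 1)⁻¹ * K) *ᵥ (fun i => P i j) = 0 := by
      intro j
      set w : (Fin m ⊕ Fin k) → ℂ := (hHh.eigenvectorBasis (σ (emb j)) : (Fin m ⊕ Fin k) → ℂ)
        with hwdef
      have hHw : H *ᵥ w = ((l1 : ℝ) : ℂ) • w := by
        funext p
        have hj := congrFun (hHh.mulVec_eigenvectorBasis (σ (emb j))) p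
        simp only [Pi.smul_apply] at hj
        have hval : hHh.eigenvalues (σ (emb j)) = l1 := heiglt (emb j) j.isLt
        rw [hval] at hj
        exact hj.trans (by simp [Complex.real_smul, Pi.smul_apply, smul_eq_mul, hwdef])
      set p0 : Fin m → ℂ := fun i => w (Sum.inl i) with hp0def
      set q0 : Fin k → ℂ := fun i => w (Sum.inr i) with hq0def
      have hsplit : Sum.elim p0 q0 = w := by funext s; rcases s with s | s <;> rfl
      have hHw2 : H *ᵥ Sum.elim p0 q0
          = Sum.elim (Ξ *ᵥ p0 + Kᴴ *ᵥ q0) (K *ᵥ p0 + W *ᵥ q0) := by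
        rw [hHdef, Matrix.fromBlocks_mulVec]
        rfl
      have hcomb : Sum.elim (Ξ *ᵥ p0 + Kᴴ *ᵥ q0) (K *ᵥ p0 + W *ᵥ q0) = ((l1 : ℝ) : ℂ) • w := by
        rw [← hHw2, hsplit, hHw]
      have eq1 : Ξ *ᵥ p0 + Kᴴ *ᵥ q0 = ((l1 : ℝ) : ℂ) • p0 := by
        funext i; exact congrFun hcomb (Sum.inl i)
      have eq2 : K *ᵥ p0 + W *ᵥ q0 = ((l1 : ℝ) : ℂ) • q0 := by
        funext i; exact congrFun hcomb (Sum.inr i)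
      have eq3 : (W - (l1 : ℂ) • 1) *ᵥ q0 = -(K *ᵥ p0) := by
        have h1 : W *ᵥ q0 = ((l1 : ℝ) : ℂ) • q0 - K *ᵥ p0 := by
          rw [← eq2]; abel
        rw [Matrix.sub_mulVec, Matrix.smul_mulVec, Matrix.one_mulVec, h1]
        abel
      have eq4 : q0 = -((W - (l1 : ℂ) • 1)⁻¹ *ᵥ (K *ᵥ p0)) := by
        have h := congrArg (fun z => (W - (l1 : ℂ) • 1)⁻¹ *ᵥ z) eq3
        simp only [Matrix.mulVec_neg] at h
        rw [Matrix.mulVec_mulVec, hWlmul, Matrix.one_mulVec] at h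
        exact h
      have eq5 : (Ξ - (l1 : ℂ) • 1) *ᵥ p0 = (Kᴴ * (W - (l1 : ℂ) • 1)⁻¹ * K) *ᵥ p0 := by
        have h1 : Ξ *ᵥ p0 = ((l1 : ℝ) : ℂ) • p0 - Kᴴ *ᵥ q0 := by
          rw [← eq1]; abel
        rw [Matrix.sub_mulVec, Matrix.smul_mulVec, Matrix.one_mulVec, h1, eq4]
        rw [Matrix.mulVec_neg]
        simp only [sub_neg_eq_add, ← Matrix.mulVec_mulVec]
        abel
      show ((Ξ - (l1 : ℂ) • 1) - Kᴴ * (W - (l1 : ℂ) • 1)⁻¹ * K) *ᵥ p0 = 0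
      rw [Matrix.sub_mulVec, eq5, sub_self]
    have hS1P : ((Ξ - (l1 : ℂ) • 1) - Kᴴ * (W - (l1 : ℂ) • 1)⁻¹ * K) * P = 0 := by
      funext i j
      have h := congrFun (hcol j) i
      simpa [Matrix.mul_apply, Matrix.mulVec, dotProduct] using h
    have hPunit : IsUnit P.det := isUnit_iff_ne_zero.mpr hPdet
    have h0 : (Ξ - (l1 : ℂ) • 1) - Kᴴ * (W - (l1 : ℂ) • 1)⁻¹ * K = 0 := by
      calc (Ξ - (l1 : ℂ) • 1) - Kᴴ * (W - (l1 : ℂ) • 1)⁻¹ * K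
          = ((Ξ - (l1 : ℂ) • 1) - Kᴴ * (W - (l1 : ℂ) • 1)⁻¹ * K) * (P * P⁻¹) := by
            rw [Matrix.mul_nonsing_inv P hPunit, Matrix.mul_one]
        _ = (((Ξ - (l1 : ℂ) • 1) - Kᴴ * (W - (l1 : ℂ) • 1)⁻¹ * K) * P) * P⁻¹ :=
            (Matrix.mul_assoc _ _ _).symm
        _ = 0 := by rw [hS1P, Matrix.zero_mul]
    exact (sub_eq_zero.mp h0).symm
  -- inverse of W in spectral form
  have hνne : ∀ i, ((ν i : ℝ) : ℂ) ≠ 0 := fun i => Complex.ofReal_ne_zero.mpr (ne_of_gt (hνpos i))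
  have hWinv : W⁻¹ = V * diagonal (fun i => (((ν i)⁻¹ : ℝ) : ℂ)) * Vᴴ := by
    rw [hWspec, conj_diag_inv V hVV hV'V _ hνne]
    have hfun : (fun i => ((ν i : ℝ) : ℂ)⁻¹) = fun i => (((ν i)⁻¹ : ℝ) : ℂ) := by
      funext i; simp [Complex.ofReal_inv]
    rw [hfun]
  -- square-root facts
  set R : Matrix (Fin m) (Fin m) ℂ := (hΞ.posSemidef.sqrt)⁻¹ with hRdef
  have hRH : Rᴴ = R := (hΞ.posSemidef.posSemidef_sqrt.1).inv
  have hRR : R * R = Ξ⁻¹ := by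
    rw [hRdef, ← Matrix.mul_inv_rev, hΞ.posSemidef.sqrt_mul_self]
  set Wr : Matrix (Fin k) (Fin k) ℂ := (hW.posSemidef.sqrt)⁻¹ with hWrdef
  have hWrH : Wrᴴ = Wr := (hW.posSemidef.posSemidef_sqrt.1).inv
  have hWrWr : Wr * Wr = W⁻¹ := by
    rw [hWrdef, ← Matrix.mul_inv_rev, hW.posSemidef.sqrt_mul_self]
  -- the trace functional is S on W⁻¹
  have htS : S = ((Ξ⁻¹ * (Kᴴ * W⁻¹ * K)).trace).re := by
    rw [hS]
    have h1 : Ksᴴ * Ks = R * (Kᴴ * W⁻¹ * K) * R := by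
      rw [hKs, conjTranspose_mul, conjTranspose_mul, hRH, hWrH, ← hWrWr]
      simp only [Matrix.mul_assoc]
    rw [h1, Matrix.trace_mul_comm (R * (Kᴴ * W⁻¹ * K)) R, ← Matrix.mul_assoc, hRR]
  -- positivity of the trace functional
  have htpos : ∀ N : Matrix (Fin k) (Fin k) ℂ, N.PosSemidef →
      0 ≤ ((Ξ⁻¹ * (Kᴴ * N * K)).trace).re := by
    intro N hN
    have h2 : (Ξ⁻¹ * (Kᴴ * N * K)).trace = ((K * R)ᴴ * N * (K * R)).trace := by
      rw [← hRR, Matrix.mul_assoc R R (Kᴴ * N * K),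
        Matrix.trace_mul_comm R (R * (Kᴴ * N * K))]
      congr 1
      rw [conjTranspose_mul, hRH]
      simp only [Matrix.mul_assoc]
    rw [h2]
    exact trace_re_nonneg (hN.conjTranspose_mul_mul_same (K * R))
  -- trace of Ξ⁻¹
  have hΞdet : IsUnit Ξ.det := isUnit_iff_ne_zero.mpr (ne_of_gt hΞ.det_pos)
  have hΞinv : Ξ⁻¹ * Ξ = 1 := Matrix.nonsing_inv_mul Ξ hΞdet
  set VΞ : Matrix (Fin m) (Fin m) ℂ :=
    (hΞ.isHermitian.eigenvectorUnitary : Matrix (Fin m) (Fin m) ℂ) with hVΞdef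
  have hVΞ1 : VΞ * VΞᴴ = 1 := by
    have h := Matrix.mem_unitaryGroup_iff.mp hΞ.isHermitian.eigenvectorUnitary.2
    rwa [Matrix.star_eq_conjTranspose] at h
  have hVΞ2 : VΞᴴ * VΞ = 1 := by
    have h := Matrix.mem_unitaryGroup_iff'.mp hΞ.isHermitian.eigenvectorUnitary.2
    rwa [Matrix.star_eq_conjTranspose] at h
  have hμne : ∀ q, ((hΞ.isHermitian.eigenvalues q : ℝ) : ℂ) ≠ 0 := fun q =>
    Complex.ofReal_ne_zero.mpr (ne_of_gt (hΞ.eigenvalues_pos q))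
  have hΞinvspec : Ξ⁻¹
      = VΞ * diagonal (fun q => (((hΞ.isHermitian.eigenvalues q)⁻¹ : ℝ) : ℂ)) * VΞᴴ := by
    conv_lhs => rw [spectral_conj hΞ.isHermitian]
    rw [conj_diag_inv _ hVΞ1 hVΞ2 _ hμne]
    have hfun : (fun q => ((hΞ.isHermitian.eigenvalues q : ℝ) : ℂ)⁻¹)
        = fun q => (((hΞ.isHermitian.eigenvalues q)⁻¹ : ℝ) : ℂ) := by
      funext q; simp [Complex.ofReal_inv]
    rw [hfun]
  have htrΞinv : (Ξ⁻¹).trace = ((∑ i, (μ i)⁻¹ : ℝ) : ℂ) := by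
    rw [hΞinvspec, conj_diag_trace _ hVΞ2]
    have h1 : ∑ i : Fin m, (μ i)⁻¹ = ∑ q : Fin m, (hΞ.isHermitian.eigenvalues q)⁻¹ := by
      rw [← Equiv.sum_comp τ (fun q => (hΞ.isHermitian.eigenvalues q)⁻¹)]
      exact Finset.sum_congr rfl fun i _ => by rw [hμ i]
    rw [h1]
    push_cast
    rfl
  -- the middle quantity
  have hmid : ((Ξ⁻¹ * (Kᴴ * (W - (l1 : ℂ) • 1)⁻¹ * K)).trace).re
      = ∑ i : Fin m, (μ i - l1) / μ i := by
    rw [hWlkey, Matrix.mul_sub, hΞinv, Matrix.mul_smul, Matrix.mul_one, trace_sub, trace_smul,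
      trace_one, htrΞinv]
    have h2 : ∀ i, (μ i - l1) / μ i = 1 - l1 * (μ i)⁻¹ := by
      intro i
      rw [sub_div, div_self (ne_of_gt (hμpos i)), div_eq_mul_inv]
    rw [Finset.sum_congr rfl fun i _ => h2 i, Finset.sum_sub_distrib, Finset.sum_const,
      Finset.card_univ, Fintype.card_fin, ← Finset.mul_sum]
    simp [Complex.ofReal_mul]
  -- first inequality
  have hD1 : ((W - (l1 : ℂ) • 1)⁻¹ - W⁻¹).PosSemidef := by
    rw [hWlinv, hWinv, ← Matrix.sub_mul, ← Matrix.mul_sub, Matrix.diagonal_sub]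
    have hfun : (fun i => (((ν i - l1)⁻¹ : ℝ) : ℂ) - (((ν i)⁻¹ : ℝ) : ℂ))
        = fun i => (((ν i - l1)⁻¹ - (ν i)⁻¹ : ℝ) : ℂ) := by
      funext i; push_cast; ring
    rw [hfun]
    refine conj_diag_psd V _ fun i => ?_
    have h3 : (ν i)⁻¹ ≤ (ν i - l1)⁻¹ := by
      apply inv_anti₀
      · linarith [hν i, hl1pos]
      · linarith [hl1pos]
    linarith
  have hsplit1 : ((Ξ⁻¹ * (Kᴴ * (W - (l1 : ℂ) • 1)⁻¹ * K)).trace).re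
      - ((Ξ⁻¹ * (Kᴴ * W⁻¹ * K)).trace).re
      = ((Ξ⁻¹ * (Kᴴ * ((W - (l1 : ℂ) • 1)⁻¹ - W⁻¹) * K)).trace).re := by
    rw [Matrix.mul_sub Kᴴ, Matrix.sub_mul, Matrix.mul_sub (Ξ⁻¹), trace_sub, Complex.sub_re]
  have hineq1 : S ≤ ∑ i : Fin m, (μ i - l1) / μ i := by
    have h4 := htpos _ hD1
    rw [← hsplit1] at h4
    rw [htS, ← hmid]
    linarith
  -- second inequality
  have hg1pos : 0 < g1 := by
    rw [hg1]
    rw [Finset.lt_inf'_iff]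
    intro i _
    exact div_pos (abs_pos.mpr (sub_ne_zero.mpr (ne_of_lt (hν i)))) (hνpos i)
  have hg1le : ∀ i, g1 ≤ (ν i - l1) / ν i := by
    intro i
    have h5 : g1 ≤ |l1 - ν i| / ν i := by
      rw [hg1]
      exact Finset.inf'_le _ (Finset.mem_univ i)
    rwa [abs_sub_comm, abs_of_pos (sub_pos.mpr (hν i))] at h5
  have hD2 : ((((g1⁻¹ : ℝ)) : ℂ) • W⁻¹ - (W - (l1 : ℂ) • 1)⁻¹).PosSemidef := by
    have hsm : (((g1⁻¹ : ℝ)) : ℂ) • W⁻¹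
        = V * diagonal (fun i => ((g1⁻¹ * (ν i)⁻¹ : ℝ) : ℂ)) * Vᴴ := by
      rw [hWinv, ← Matrix.smul_mul, ← Matrix.mul_smul, ← Matrix.diagonal_smul]
      have hfun : ((((g1⁻¹ : ℝ)) : ℂ) • fun i => (((ν i)⁻¹ : ℝ) : ℂ))
          = fun i => ((g1⁻¹ * (ν i)⁻¹ : ℝ) : ℂ) := by
        funext i; simp only [Pi.smul_apply, smul_eq_mul]; norm_cast
      rw [hfun]
    rw [hsm, hWlinv, ← Matrix.sub_mul, ← Matrix.mul_sub, Matrix.diagonal_sub]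
    have hfun : (fun i => ((g1⁻¹ * (ν i)⁻¹ : ℝ) : ℂ) - (((ν i - l1)⁻¹ : ℝ) : ℂ))
        = fun i => ((g1⁻¹ * (ν i)⁻¹ - (ν i - l1)⁻¹ : ℝ) : ℂ) := by
      funext i; push_cast; ring
    rw [hfun]
    refine conj_diag_psd V _ fun i => ?_
    have h6 : g1 * ν i ≤ ν i - l1 := (le_div_iff₀ (hνpos i)).mp (hg1le i)
    have h7 : (ν i - l1)⁻¹ ≤ (g1 * ν i)⁻¹ := by
      apply inv_anti₀
      · exact mul_pos hg1pos (hνpos i)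
      · exact h6
    rw [mul_inv] at h7
    linarith
  have hsplit2 : g1⁻¹ * ((Ξ⁻¹ * (Kᴴ * W⁻¹ * K)).trace).re
      - ((Ξ⁻¹ * (Kᴴ * (W - (l1 : ℂ) • 1)⁻¹ * K)).trace).re
      = ((Ξ⁻¹ * (Kᴴ * ((((g1⁻¹ : ℝ)) : ℂ) • W⁻¹ - (W - (l1 : ℂ) • 1)⁻¹) * K)).trace).re := by
    rw [Matrix.mul_sub Kᴴ, Matrix.sub_mul, Matrix.mul_sub (Ξ⁻¹), trace_sub, Complex.sub_re]
    rw [Matrix.mul_smul, Matrix.smul_mul, Matrix.mul_smul, trace_smul]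
    rw [smul_eq_mul, Complex.re_ofReal_mul]
  have hineq2 : (∑ i : Fin m, (μ i - l1) / μ i) ≤ S / g1 := by
    have h8 := htpos _ hD2
    rw [← hsplit2] at h8
    rw [htS, ← hmid] at *
    rw [div_eq_inv_mul]
    linarith
  exact ⟨hineq1, hineq2⟩
end

section
/- Let H be Hermitian positive definite with eigenvalues λ₁ ≤ λ₂ ≤ … and let ψ be a unit vector with μ = (ψ, Hψ) < λ₂, where λ₁ < λ₂. Then (μ − λ₁)/μ ≤ ((λ₂ + μ)/(λ₂ − μ)) · ‖Hψ/μ − ψ‖²_{H⁻¹}/‖ψ‖²_{H⁻¹}, and also ‖Hψ/μ − ψ‖²_{H⁻¹}/‖ψ‖²_{H⁻¹} ≤ (μ − λ₁)/μ. -/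
open Matrix
open scoped ComplexOrder

private lemma tk_scalar {A B m a : ℝ} (hA : 0 < A) (h1 : A ≤ m) (h2 : m < B)
    (ha : 0 < a) (hAa : A * a ≤ 1) (hK : 0 ≤ m - (A + B) + A * B * a) :
    (a - 1 / m) / a ≤ (m - A) / m ∧
      (m - A) / m ≤ ((B + m) / (B - m)) * ((a - 1 / m) / a) := by
  have hm : 0 < m := lt_of_lt_of_le hA h1
  have hB : 0 < B := lt_trans hm h2
  constructor
  · rw [div_le_div_iff₀ ha hm]
    have h3 : (a - 1 / m) * m = a * m - 1 := by field_simp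
    rw [h3]; nlinarith
  · rw [div_mul_div_comm, div_le_div_iff₀ hm (mul_pos (sub_pos.2 h2) ha)]
    have h3 : (B + m) * (a - 1 / m) * m = (B + m) * (a * m - 1) := by field_simp
    rw [h3]
    nlinarith [mul_nonneg hK (by nlinarith : (0:ℝ) ≤ 2*m^2 + A*B - A*m),
      mul_nonneg (mul_nonneg (sub_nonneg.2 h1) (sub_pos.2 h2).le)
        (by nlinarith : (0:ℝ) ≤ 2*m - A),
      mul_pos hA hB]

/-- Relative (form-version) Temple–Kato inequality for `m = 1`: for `H` Hermitian positive
definite with sorted eigenvalues `e`, `λ₁ < λ₂`, and a unit vector `ψ` with Rayleigh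
quotient `λ₁ ≤ μ < λ₂`, with `η² = ((ψ,H⁻¹ψ) − 1/μ)/(ψ,H⁻¹ψ)` one has
`η² ≤ (μ − λ₁)/μ ≤ ((λ₂ + μ)/(λ₂ − μ)) η²`. -/
theorem temple_kato_relative
    {n : ℕ} (hn : 1 < n) (H : Matrix (Fin n) (Fin n) ℂ) (hH : H.PosDef)
    (e : Fin n → ℝ) (σ : Equiv.Perm (Fin n))
    (he : ∀ i, e i = hH.isHermitian.eigenvalues (σ i)) (hmono : Monotone e)
    (hgap : e ⟨0, by omega⟩ < e ⟨1, hn⟩)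
    (ψ : Fin n → ℂ) (hψ : dotProduct (star ψ) ψ = 1)
    (μ : ℝ) (hμ : μ = (dotProduct (star ψ) (H.mulVec ψ)).re)
    (hμ1 : e ⟨0, by omega⟩ ≤ μ) (hμ2 : μ < e ⟨1, hn⟩) :
    ((dotProduct (star ψ) (H⁻¹.mulVec ψ)).re - 1 / μ) /
        (dotProduct (star ψ) (H⁻¹.mulVec ψ)).re ≤ (μ - e ⟨0, by omega⟩) / μ ∧
    (μ - e ⟨0, by omega⟩) / μ ≤
      ((e ⟨1, hn⟩ + μ) / (e ⟨1, hn⟩ - μ)) *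
        (((dotProduct (star ψ) (H⁻¹.mulVec ψ)).re - 1 / μ) /
          (dotProduct (star ψ) (H⁻¹.mulVec ψ)).re) := by
  classical
  have hHerm := hH.isHermitian
  set U : Matrix (Fin n) (Fin n) ℂ := (hHerm.eigenvectorUnitary : Matrix (Fin n) (Fin n) ℂ)
    with hUdef
  set lam : Fin n → ℝ := hHerm.eigenvalues with hlamdef
  have hUU : U * star U = 1 := (Matrix.mem_unitaryGroup_iff).mp hHerm.eigenvectorUnitary.2
  have hUU' : star U * U = 1 := (Matrix.mem_unitaryGroup_iff').mp hHerm.eigenvectorUnitary.2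
  set φ : Fin n → ℂ := (star U) *ᵥ ψ with hφdef
  have hsφ : star φ = star ψ ᵥ* U := by
    rw [hφdef, star_mulVec, star_eq_conjTranspose, conjTranspose_conjTranspose]
  have key : ∀ d : Fin n → ℂ,
      dotProduct (star ψ) ((U * diagonal d * star U) *ᵥ ψ)
        = ∑ i, d i * (‖φ i‖ : ℂ) ^ 2 := by
    intro d
    rw [← mulVec_mulVec, ← mulVec_mulVec, dotProduct_mulVec, ← hsφ]
    rw [dotProduct]
    congr 1
    ext i
    rw [mulVec_diagonal]
    have : (starRingEnd ℂ) (φ i) * φ i = (‖φ i‖ : ℂ) ^ 2 := by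
      rw [← Complex.normSq_eq_conj_mul_self, Complex.normSq_eq_norm_sq]
      push_cast
      ring
    calc star φ i * (d i * φ i) = d i * ((starRingEnd ℂ) (φ i) * φ i) := by
          simp [Pi.star_apply]; ring
      _ = d i * (‖φ i‖ : ℂ) ^ 2 := by rw [this]
  have hlampos : ∀ i, 0 < lam i := fun i => hH.eigenvalues_pos i
  have hspec : H = U * diagonal (fun i => (lam i : ℂ)) * star U := by
    have := hHerm.spectral_theorem
    rw [Unitary.conjStarAlgAut_apply] at this
    exact this
  have hinv : H⁻¹ = U * diagonal (fun i => ((lam i : ℝ) : ℂ)⁻¹) * star U := by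
    apply inv_eq_right_inv
    rw [hspec]
    calc U * diagonal (fun i => (lam i : ℂ)) * star U *
          (U * diagonal (fun i => ((lam i : ℝ) : ℂ)⁻¹) * star U)
        = U * diagonal (fun i => (lam i : ℂ)) * (star U * U) *
            diagonal (fun i => ((lam i : ℝ) : ℂ)⁻¹) * star U := by
          noncomm_ring
      _ = U * (diagonal (fun i => (lam i : ℂ)) * diagonal (fun i => ((lam i : ℝ) : ℂ)⁻¹)) *
            star U := by rw [hUU']; noncomm_ring
      _ = 1 := by
          rw [diagonal_mul_diagonal]
          have : (fun i => (lam i : ℂ) * ((lam i : ℝ) : ℂ)⁻¹) = fun _ => (1 : ℂ) := by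
            funext i
            exact mul_inv_cancel₀ (by exact_mod_cast (hlampos i).ne')
          rw [this, diagonal_one, mul_one, hUU]
  have hone : (1 : Matrix (Fin n) (Fin n) ℂ) = U * diagonal (fun _ => (1 : ℂ)) * star U := by
    rw [diagonal_one, mul_one, hUU]
  have hre : ∀ r : Fin n → ℝ,
      (∑ i, ((r i : ℂ)) * (‖φ i‖ : ℂ) ^ 2).re = ∑ i, r i * ‖φ i‖ ^ 2 := by
    intro r
    rw [Complex.re_sum]
    refine Finset.sum_congr rfl fun i _ => ?_
    have : ((r i : ℂ)) * (‖φ i‖ : ℂ) ^ 2 = ((r i * ‖φ i‖ ^ 2 : ℝ) : ℂ) := by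
      push_cast; ring
    rw [this, Complex.ofReal_re]
  have hsum1 : ∑ i, ‖φ i‖ ^ 2 = 1 := by
    have h1 := key (fun _ => (1 : ℂ))
    rw [← hone, one_mulVec, hψ] at h1
    have h2 := congrArg Complex.re h1.symm
    have h3 := hre (fun _ => (1 : ℝ))
    simp only [Complex.ofReal_one] at h3
    rw [h3, Complex.one_re] at h2
    simpa using h2
  have hmu' : μ = ∑ i, lam i * ‖φ i‖ ^ 2 := by
    rw [hμ, hspec, key, hre]
  set a : ℝ := (dotProduct (star ψ) (H⁻¹.mulVec ψ)).re with hadef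
  have ha' : a = ∑ i, (lam i)⁻¹ * ‖φ i‖ ^ 2 := by
    rw [hadef, hinv]
    have : (fun i => ((lam i : ℝ) : ℂ)⁻¹) = fun i => (((lam i)⁻¹ : ℝ) : ℂ) := by
      funext i; push_cast; rfl
    rw [this, key, hre]
  have hAle : ∀ i, e ⟨0, by omega⟩ ≤ lam i := by
    intro i
    have h4 : lam i = e (σ.symm i) := by rw [he, Equiv.apply_symm_apply]
    rw [h4]
    exact hmono (by simp [Fin.le_def])
  have hApos : (0 : ℝ) < e ⟨0, by omega⟩ := by rw [he]; exact hlampos _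
  have hfac : ∀ i, 0 ≤ (lam i - e ⟨0, by omega⟩) * (lam i - e ⟨1, hn⟩) := by
    intro i
    have h4 : lam i = e (σ.symm i) := by rw [he, Equiv.apply_symm_apply]
    by_cases hc : σ.symm i = ⟨0, by omega⟩
    · rw [h4, hc, sub_self, zero_mul]
    · have h5 : (⟨1, hn⟩ : Fin n) ≤ σ.symm i := by
        have : (σ.symm i).val ≠ 0 := fun h0 => hc (Fin.ext h0)
        simp [Fin.le_def]; omega
      have h6 : e ⟨1, hn⟩ ≤ lam i := h4 ▸ hmono h5
      have h7 : e ⟨0, by omega⟩ ≤ lam i := hAle i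
      nlinarith
  have hapos : 0 < a := by
    obtain ⟨i, hi⟩ : ∃ i, ‖φ i‖ ^ 2 ≠ 0 := by
      by_contra hcon
      push_neg at hcon
      rw [Finset.sum_eq_zero (fun i _ => hcon i)] at hsum1
      norm_num at hsum1
    rw [ha']
    refine Finset.sum_pos' (fun i _ => mul_nonneg (inv_pos.2 (hlampos i)).le (sq_nonneg _))
      ⟨i, Finset.mem_univ i, mul_pos (inv_pos.2 (hlampos i))
        (lt_of_le_of_ne (sq_nonneg _) (Ne.symm hi))⟩
  have hAa : e ⟨0, by omega⟩ * a ≤ 1 := by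
    calc e ⟨0, by omega⟩ * a = ∑ i, e ⟨0, by omega⟩ * ((lam i)⁻¹ * ‖φ i‖ ^ 2) := by
          rw [ha', Finset.mul_sum]
      _ ≤ ∑ i, ‖φ i‖ ^ 2 := by
          refine Finset.sum_le_sum fun i _ => ?_
          rw [← mul_assoc]
          refine mul_le_of_le_one_left (sq_nonneg _) ?_
          rw [← div_eq_mul_inv, div_le_one (hlampos i)]
          exact hAle i
      _ = 1 := hsum1
  have hK : 0 ≤ μ - (e ⟨0, by omega⟩ + e ⟨1, hn⟩) + e ⟨0, by omega⟩ * e ⟨1, hn⟩ * a := by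
    have hterm : ∀ i, 0 ≤ (lam i - (e ⟨0, by omega⟩ + e ⟨1, hn⟩)
        + e ⟨0, by omega⟩ * e ⟨1, hn⟩ * (lam i)⁻¹) * ‖φ i‖ ^ 2 := by
      intro i
      refine mul_nonneg ?_ (sq_nonneg _)
      have hne := (hlampos i).ne'
      have heq : lam i - (e ⟨0, by omega⟩ + e ⟨1, hn⟩)
          + e ⟨0, by omega⟩ * e ⟨1, hn⟩ * (lam i)⁻¹
          = (lam i - e ⟨0, by omega⟩) * (lam i - e ⟨1, hn⟩) / lam i := by
        field_simp
        ring
      rw [heq]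
      exact div_nonneg (hfac i) (hlampos i).le
    have hsplit : μ - (e ⟨0, by omega⟩ + e ⟨1, hn⟩) + e ⟨0, by omega⟩ * e ⟨1, hn⟩ * a
        = ∑ i, (lam i - (e ⟨0, by omega⟩ + e ⟨1, hn⟩)
            + e ⟨0, by omega⟩ * e ⟨1, hn⟩ * (lam i)⁻¹) * ‖φ i‖ ^ 2 := by
      have : ∑ i, (lam i - (e ⟨0, by omega⟩ + e ⟨1, hn⟩)
            + e ⟨0, by omega⟩ * e ⟨1, hn⟩ * (lam i)⁻¹) * ‖φ i‖ ^ 2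
          = (∑ i, lam i * ‖φ i‖ ^ 2)
            - (e ⟨0, by omega⟩ + e ⟨1, hn⟩) * (∑ i, ‖φ i‖ ^ 2)
            + e ⟨0, by omega⟩ * e ⟨1, hn⟩ * (∑ i, (lam i)⁻¹ * ‖φ i‖ ^ 2) := by
        rw [Finset.mul_sum, Finset.mul_sum, ← Finset.sum_sub_distrib, ← Finset.sum_add_distrib]
        exact Finset.sum_congr rfl fun i _ => by ring
      rw [this, ← hmu', ← ha', hsum1, mul_one]
    rw [hsplit]
    exact Finset.sum_nonneg fun i _ => hterm i
  exact tk_scalar hApos hμ1 hμ2 hapos hAa hK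
end
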